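/- arXiv:2402.15034 — 3 statements merged into one kernel-verified Lean document; each statement's English description precedes it below -/
import Mathlib

section
/- For every integer k ≥ 1, every finite simple graph G, and every (≤k)-simplicial blowup Q of G, rcr(Q) ≤ (Δ(Q) + 1)⁴ · rcr(G) + 2 · Δ(Q)³ · ‖Q‖. -/
/-! ## Basic geometric notions -/

/-- The closed straight-line segment determined by an unordered pair of points of the plane. -/
def segOf : Sym2 (ℝ × ℝ) → Set (ℝ × ℝ) :=
  Sym2.lift ⟨fun a b => segment ℝ a b, fun a b => segment_symm ℝ a b⟩

/-- A set `S` of points of the plane is in *general position* if no three of its points are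
collinear and no three distinct segments between pairs of its points have a common point,
unless all three segments share a common endpoint. -/
def GenPos (S : Set (ℝ × ℝ)) : Prop :=
  (∀ a ∈ S, ∀ b ∈ S, ∀ c ∈ S, a ≠ b → a ≠ c → b ≠ c →
      ¬ Collinear ℝ ({a, b, c} : Set (ℝ × ℝ))) ∧
  (∀ s₁ s₂ s₃ : Sym2 (ℝ × ℝ),
      (∀ x ∈ s₁, x ∈ S) → (∀ x ∈ s₂, x ∈ S) → (∀ x ∈ s₃, x ∈ S) →
      s₁ ≠ s₂ → s₁ ≠ s₃ → s₂ ≠ s₃ →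
      ∀ q, q ∈ segOf s₁ → q ∈ segOf s₂ → q ∈ segOf s₃ →
        ∃ z, z ∈ s₁ ∧ z ∈ s₂ ∧ z ∈ s₃)

/-! ## Multigraphs and their rectilinear drawings -/

/-- A multigraph: parallel edges allowed, no loops.  `E` indexes the edges. -/
structure Multigraph (V E : Type) where
  ends : E → Sym2 V
  not_isDiag : ∀ e, ¬ (ends e).IsDiag

namespace Multigraph

variable {V E : Type}

/-- A rectilinear drawing of a multigraph: an injective placement of the vertices at points
of the plane in general position; each edge is represented by the closed segment between
the points of its endpoints. -/
def IsRectDrawing (_K : Multigraph V E) (p : V → ℝ × ℝ) : Prop :=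
  Function.Injective p ∧ GenPos (Set.range p)

/-- Two edges form a *crossing pair* in a drawing if they have no common endpoint and their
segments have a common point. -/
def CrossingPair (K : Multigraph V E) (p : V → ℝ × ℝ) (e f : E) : Prop :=
  (∀ v : V, ¬ (v ∈ K.ends e ∧ v ∈ K.ends f)) ∧
  (segOf ((K.ends e).map p) ∩ segOf ((K.ends f).map p)).Nonempty

/-- The number of crossings of a rectilinear drawing: the number of unordered crossing
pairs of edges. -/
noncomputable def crossCount (K : Multigraph V E) (p : V → ℝ × ℝ) : ℕ :=
  Nat.card {s : Sym2 E // ∃ e f : E, s = s(e, f) ∧ K.CrossingPair p e f}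

/-- The rectilinear crossing number of a multigraph. -/
noncomputable def rcr (K : Multigraph V E) : ℕ :=
  sInf {n | ∃ p : V → ℝ × ℝ, K.IsRectDrawing p ∧ K.crossCount p = n}

/-- The degree of a vertex: the number of edges incident to it. -/
noncomputable def deg (K : Multigraph V E) (v : V) : ℕ := Nat.card {e : E // v ∈ K.ends e}

/-- The maximum degree `Δ`. -/
noncomputable def maxDeg (K : Multigraph V E) : ℕ := sSup (Set.range K.deg)

/-- The number of edges (counted with multiplicity). -/
noncomputable def edgeCount (_K : Multigraph V E) : ℕ := Nat.card E

/-- The underlying simple graph of a multigraph. -/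
def toSimple (K : Multigraph V E) : SimpleGraph V where
  Adj u v := u ≠ v ∧ ∃ e, K.ends e = s(u, v)
  symm := ⟨by
    rintro u v ⟨huv, e, he⟩
    exact ⟨huv.symm, e, he.trans (Sym2.eq_swap)⟩⟩
  loopless := ⟨fun v h => h.1 rfl⟩

end Multigraph

/-! ## Simple graphs: rectilinear drawings, degree, edges -/

/-- The multigraph associated with a simple graph (edges indexed by the edge set). -/
def SimpleGraph.toMulti {V : Type} (G : SimpleGraph V) : Multigraph V G.edgeSet where
  ends := Subtype.val
  not_isDiag := fun e => G.not_isDiag_of_mem_edgeSet e.2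

/-- The rectilinear crossing number of a simple graph. -/
noncomputable def SimpleGraph.rcr {V : Type} (G : SimpleGraph V) : ℕ := G.toMulti.rcr

/-- The maximum degree `Δ(G)` of a simple graph. -/
noncomputable def SimpleGraph.maxDeg {V : Type} (G : SimpleGraph V) : ℕ := G.toMulti.maxDeg

/-- The number `‖G‖` of edges of a simple graph. -/
noncomputable def SimpleGraph.edgeCount {V : Type} (G : SimpleGraph V) : ℕ :=
  Nat.card G.edgeSet

/-! ## Topological drawings, crossing number, planarity -/

/-- `A` is the image of a simple arc from `x` to `y`. -/
def IsArc (A : Set (ℝ × ℝ)) (x y : ℝ × ℝ) : Prop :=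
  ∃ γ : Path x y, Function.Injective γ ∧ Set.range γ = A

/-- A drawing of a simple graph in the plane: vertices are distinct points, each edge is a
simple arc between the points of its endpoints, no edge passes through a vertex other than
its own endpoints, two distinct edges meet in finitely many points, and no three edges have
a common point except at a common endpoint. -/
def SimpleGraph.IsTopDrawing {V : Type} (G : SimpleGraph V) (p : V → ℝ × ℝ)
    (A : Sym2 V → Set (ℝ × ℝ)) : Prop :=
  Function.Injective p ∧
  (∀ a b : V, G.Adj a b → IsArc (A s(a, b)) (p a) (p b)) ∧
  (∀ e ∈ G.edgeSet, ∀ v : V, p v ∈ A e → v ∈ e) ∧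
  (∀ e ∈ G.edgeSet, ∀ f ∈ G.edgeSet, e ≠ f → (A e ∩ A f).Finite) ∧
  (∀ e ∈ G.edgeSet, ∀ f ∈ G.edgeSet, ∀ g ∈ G.edgeSet, e ≠ f → e ≠ g → f ≠ g →
    ∀ q : ℝ × ℝ, q ∈ A e → q ∈ A f → q ∈ A g →
      ∃ v : V, v ∈ e ∧ v ∈ f ∧ v ∈ g ∧ p v = q)

/-- The number of crossings of a topological drawing: pairs (pair of edges, point) where the
point lies on both edges and is not the image of a common endpoint. -/
noncomputable def SimpleGraph.topCrossCount {V : Type} (G : SimpleGraph V) (p : V → ℝ × ℝ)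
    (A : Sym2 V → Set (ℝ × ℝ)) : ℕ :=
  Nat.card {x : Sym2 (Sym2 V) × (ℝ × ℝ) //
    ∃ e f : Sym2 V, x.1 = s(e, f) ∧ e ≠ f ∧ e ∈ G.edgeSet ∧ f ∈ G.edgeSet ∧
      x.2 ∈ A e ∧ x.2 ∈ A f ∧ ¬ ∃ v : V, v ∈ e ∧ v ∈ f ∧ p v = x.2}

/-- The crossing number of a simple graph. -/
noncomputable def SimpleGraph.cr {V : Type} (G : SimpleGraph V) : ℕ :=
  sInf {n | ∃ p A, G.IsTopDrawing p A ∧ G.topCrossCount p A = n}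

/-- A graph is planar if it has a crossing-free drawing in the plane. -/
def SimpleGraph.IsPlanarDrawable {V : Type} (G : SimpleGraph V) : Prop :=
  ∃ p A, G.IsTopDrawing p A ∧ G.topCrossCount p A = 0

/-! ## Minors -/

/-- `X.IsMinorOf G`: `X` can be obtained from a subgraph of `G` by contracting edges;
witnessed by disjoint nonempty connected branch sets, one for each vertex of `X`, with an
edge of `G` between the branch sets of any two adjacent vertices of `X`. -/
def SimpleGraph.IsMinorOf {W V : Type} (X : SimpleGraph W) (G : SimpleGraph V) : Prop :=
  ∃ φ : V → Option W,
    (∀ w : W, (φ ⁻¹' {some w}).Nonempty) ∧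
    (∀ w : W, (G.induce (φ ⁻¹' {some w})).Connected) ∧
    (∀ w₁ w₂ : W, X.Adj w₁ w₂ → ∃ a b : V, φ a = some w₁ ∧ φ b = some w₂ ∧ G.Adj a b)

/-! ## Tree decompositions and treewidth -/

/-- `G` has a tree decomposition of width at most `k`. -/
def SimpleGraph.HasTreewidthAtMost {V : Type} (G : SimpleGraph V) (k : ℕ) : Prop :=
  ∃ (ι : Type) (T : SimpleGraph ι) (B : ι → Set V),
    T.IsTree ∧
    (∀ u v : V, G.Adj u v → ∃ x, u ∈ B x ∧ v ∈ B x) ∧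
    (∀ v : V, {x | v ∈ B x}.Nonempty) ∧
    (∀ v : V, (T.induce {x | v ∈ B x}).Connected) ∧
    (∀ x, (B x).Finite ∧ (B x).ncard ≤ k + 1)

/-! ## Clique-sums -/

/-- `IsCliqueSumOf k G A B`: the graph `G` is obtained by an `l`-clique-sum of the disjoint
graphs `A` and `B` for some `1 ≤ l ≤ k`: cliques of size `l` of `A` and `B` are identified
via a bijection, and some edges of the resulting clique are possibly deleted. -/
def IsCliqueSumOf (k : ℕ) {V V₁ V₂ : Type} (G : SimpleGraph V)
    (A : SimpleGraph V₁) (B : SimpleGraph V₂) : Prop :=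
  ∃ (i : V₁ → V) (j : V₂ → V) (S : Set V₁) (T : Set V₂),
    Function.Injective i ∧ Function.Injective j ∧
    Set.range i ∪ Set.range j = Set.univ ∧
    A.IsClique S ∧ B.IsClique T ∧
    S.Nonempty ∧ S.Finite ∧ S.ncard ≤ k ∧
    i '' S = Set.range i ∩ Set.range j ∧
    j '' T = Set.range i ∩ Set.range j ∧
    (∀ a a', A.Adj a a' → G.Adj (i a) (i a') ∨ (a ∈ S ∧ a' ∈ S)) ∧
    (∀ b b', B.Adj b b' → G.Adj (j b) (j b') ∨ (b ∈ T ∧ b' ∈ T)) ∧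
    (∀ x y, G.Adj x y →
      (∃ a a', A.Adj a a' ∧ i a = x ∧ i a' = y) ∨
      (∃ b b', B.Adj b b' ∧ j b = x ∧ j b' = y))

/-- `CliqueSumGen k P G`: `G` can be obtained by iterated `(≤ k)`-clique-sums of pieces each
of which satisfies the property `P`. -/
inductive CliqueSumGen (k : ℕ) (P : ∀ {W : Type}, SimpleGraph W → Prop) :
    ∀ {V : Type}, SimpleGraph V → Prop
  | base {V : Type} (G : SimpleGraph V) : P G → CliqueSumGen k P G
  | sum {V V₁ V₂ : Type} (G : SimpleGraph V) (G₁ : SimpleGraph V₁) (G₂ : SimpleGraph V₂) :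
      CliqueSumGen k P G₁ → P G₂ → IsCliqueSumOf k G G₁ G₂ → CliqueSumGen k P G

/-! ## Simplicial blowups and agreeability -/

/-- `IsSimplicialBlowup k G Q`: the multigraph `Q` is a `(≤ k)`-simplicial blowup of the
simple graph `G`: it is obtained from `G` by adding an independent set of new vertices, each
adjacent to all vertices of some clique of size at most `k` of `G` (possibly with parallel
edges), and finally deleting zero or more edges from the cliques involved. -/
def IsSimplicialBlowup (k : ℕ) {V W F : Type} (G : SimpleGraph V) (Q : Multigraph W F) :
    Prop :=
  ∃ (ι : V → W) (C : W → Set V),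
    Function.Injective ι ∧
    (∀ u : W, u ∉ Set.range ι → G.IsClique (C u) ∧ (C u).Finite ∧ (C u).ncard ≤ k) ∧
    (∀ u : W, u ∉ Set.range ι → ∀ a ∈ C u, ∃ e : F, Q.ends e = s(u, ι a)) ∧
    (∀ e : F, (∃ a b : V, G.Adj a b ∧ Q.ends e = s(ι a, ι b)) ∨
      (∃ (u : W) (a : V), u ∉ Set.range ι ∧ a ∈ C u ∧ Q.ends e = s(u, ι a))) ∧
    (∀ e f : F, ∀ a b : V, Q.ends e = s(ι a, ι b) → Q.ends f = s(ι a, ι b) → e = f) ∧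
    (∀ a b : V, G.Adj a b →
      (∃ e : F, Q.ends e = s(ι a, ι b)) ∨ ∃ u : W, u ∉ Set.range ι ∧ a ∈ C u ∧ b ∈ C u)

/-- A graph `R` is `(k, c)`-agreeable if for every induced subgraph `R'` of `R` and every
(finite) `(≤ k)`-simplicial blowup `R*` of `R'`, `rcr(R*) ≤ c · Δ(R*) · ‖R*‖`. -/
def Agreeable (k : ℕ) (c : ℝ) {V : Type} (G : SimpleGraph V) : Prop :=
  ∀ (s : Set V) (W F : Type), Finite W → Finite F → ∀ Q : Multigraph W F,
    IsSimplicialBlowup k (G.induce s) Q →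
    (Q.rcr : ℝ) ≤ c * Q.maxDeg * Q.edgeCount

/-! ## H-partitions -/

/-- An `H`-partition of a multigraph `K`: the vertices of the simple graph `H` index
nonempty bags partitioning `V(K)`, and whenever an edge of `K` has endpoints in two distinct
bags, the corresponding vertices of `H` are adjacent. -/
def IsHPartition {V E ι : Type} (K : Multigraph V E) (H : SimpleGraph ι) (B : ι → Set V) :
    Prop :=
  (∀ x : ι, (B x).Nonempty) ∧
  (∀ v : V, ∃! x : ι, v ∈ B x) ∧
  (∀ e : E, ∀ u ∈ K.ends e, ∀ v ∈ K.ends e, ∀ x y : ι,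
    u ∈ B x → v ∈ B y → x ≠ y → H.Adj x y)

/-- A separating triangle of `G`: a triangle whose removal disconnects `G`. -/
def HasSepTriangle {V : Type} (G : SimpleGraph V) : Prop :=
  ∃ a b c : V, G.Adj a b ∧ G.Adj a c ∧ G.Adj b c ∧
    ∃ u v : (({a, b, c} : Set V)ᶜ : Set V),
      ¬ (G.induce (({a, b, c} : Set V)ᶜ)).Reachable u v


noncomputable section
namespace RcrAux

abbrev Pt := ℝ × ℝ

def cross (u v : Pt) : ℝ := u.1 * v.2 - u.2 * v.1

/-- Three points are collinear (as sets) iff a cross product vanishes. -/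
def Col3 (a b c : Pt) : Prop := Collinear ℝ ({a, b, c} : Set Pt)

lemma par {u v w : Pt} (hu : u ≠ 0) (h1 : cross u v = 0) (h2 : cross u w = 0) :
    cross v w = 0 := by
  have key : u.1 * cross v w = v.1 * cross u w - w.1 * cross u v := by
    simp only [cross]; ring
  have key2 : u.2 * cross v w = v.2 * cross u w - w.2 * cross u v := by
    simp only [cross]; ring
  rcases eq_or_ne u.1 0 with h|h
  · have h2' : u.2 ≠ 0 := by
      intro h2'; exact hu (Prod.ext h h2')
    rw [h1, h2] at key2; simp at key2
    rcases key2 with h'|h'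
    · exact absurd h' h2'
    · exact h'
  · rw [h1, h2] at key; simp at key
    rcases key with h'|h'
    · exact absurd h' h
    · exact h'

lemma col3_iff_cross {a b c : Pt} : Col3 a b c ↔ cross (b - a) (c - a) = 0 := by
  constructor
  · intro h
    rw [Col3, collinear_iff_of_mem (Set.mem_insert a _)] at h
    obtain ⟨v, hv⟩ := h
    obtain ⟨rb, hrb⟩ := hv b (by simp)
    obtain ⟨rc, hrc⟩ := hv c (by simp)
    have hb : b - a = rb • v := by rw [hrb]; simp [vadd_eq_add]
    have hc : c - a = rc • v := by rw [hrc]; simp [vadd_eq_add]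
    rw [hb, hc]
    simp only [cross, Prod.smul_fst, Prod.smul_snd, smul_eq_mul]
    ring_nf
  · intro h
    simp only [cross, Prod.fst_sub, Prod.snd_sub] at h
    rcases eq_or_ne b a with hba|hba
    · have : ({a, b, c} : Set Pt) = {a, c} := by
        rw [hba]; ext x; constructor
        · rintro (h'|h'|h') <;> simp [h']
        · rintro (h'|h') <;> simp [h']
      rw [Col3, this]; exact collinear_pair ℝ a c
    · rw [Col3, collinear_iff_of_mem (Set.mem_insert a _)]
      refine ⟨b - a, fun p hp => ?_⟩
      rcases hp with rfl | hp
      · exact ⟨0, by simp⟩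
      rcases hp with rfl | hp
      · exact ⟨1, by simp [vadd_eq_add]⟩
      · rcases hp with rfl
        have hb0 : b - a ≠ 0 := sub_ne_zero.2 hba
        have hkey : ∃ r : ℝ, p - a = r • (b - a) := by
          rcases eq_or_ne (b.1 - a.1) 0 with h1|h1
          · have h2 : b.2 - a.2 ≠ 0 := by
              intro h2
              exact hb0 (by apply Prod.ext <;>
                simp [Prod.fst_sub, Prod.snd_sub, h1, h2])
            refine ⟨(p.2 - a.2) / (b.2 - a.2), Prod.ext ?_ ?_⟩
            · simp only [Prod.fst_sub, Prod.smul_fst, smul_eq_mul]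
              rw [h1, mul_zero]
              have : (b.2 - a.2) * (p.1 - a.1) = 0 := by
                linear_combination -h + (p.2 - a.2) * h1
              rcases mul_eq_zero.mp this with h'|h'
              · exact absurd h' h2
              · exact h'
            · simp only [Prod.snd_sub, Prod.smul_snd, smul_eq_mul]
              exact (div_mul_cancel₀ _ h2).symm
          · refine ⟨(p.1 - a.1) / (b.1 - a.1), Prod.ext ?_ ?_⟩
            · simp only [Prod.fst_sub, Prod.smul_fst, smul_eq_mul]
              exact (div_mul_cancel₀ _ h1).symm
            · simp only [Prod.snd_sub, Prod.smul_snd, smul_eq_mul]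
              rw [div_mul_eq_mul_div, eq_div_iff h1]
              linear_combination h
        obtain ⟨r, hr⟩ := hkey
        exact ⟨r, by rw [vadd_eq_add, ← hr]; abel⟩

lemma col3_comm_left {a b c : Pt} (h : Col3 a b c) : Col3 b a c := by
  have : ({b, a, c} : Set Pt) = {a, b, c} := by ext x; simp; tauto
  rw [Col3, this]; exact h

lemma col3_rotate {a b c : Pt} (h : Col3 a b c) : Col3 b c a := by
  have : ({b, c, a} : Set Pt) = {a, b, c} := by ext x; simp; tauto
  rw [Col3, this]; exact h

lemma segOf_mk (a b : Pt) : segOf s(a, b) = segment ℝ a b := by simp [segOf]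

lemma mem_segment_rep {a b x : Pt} (h : x ∈ segment ℝ a b) :
    ∃ t : ℝ, 0 ≤ t ∧ t ≤ 1 ∧ x = a + t • (b - a) := by
  rw [segment_eq_image'] at h
  obtain ⟨t, ht, rfl⟩ := h
  exact ⟨t, ht.1, ht.2, rfl⟩

lemma col3_of_mem_segment {a b x : Pt} (h : x ∈ segment ℝ a b) : Col3 a b x := by
  obtain ⟨t, _, _, rfl⟩ := mem_segment_rep h
  rw [col3_iff_cross]
  simp only [cross, Prod.fst_sub, Prod.snd_sub, Prod.fst_add, Prod.snd_add,
    Prod.smul_fst, Prod.smul_snd, smul_eq_mul]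
  ring

/-- a nonzero quadratic has finitely many roots. -/
lemma quad_roots_finite {A B C : ℝ} (h : ¬ (A = 0 ∧ B = 0)) :
    {t : ℝ | A * t ^ 2 + B * t + C = 0}.Finite := by
  set s := {t : ℝ | A * t ^ 2 + B * t + C = 0} with hs
  by_cases hsub : s.Subsingleton
  · exact hsub.finite
  · rw [Set.not_subsingleton_iff] at hsub
    obtain ⟨t₁, ht₁, t₂, ht₂, hne⟩ := hsub
    have e₁ : A * t₁ ^ 2 + B * t₁ + C = 0 := ht₁
    have e₂ : A * t₂ ^ 2 + B * t₂ + C = 0 := ht₂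
    have hAB : A * (t₁ + t₂) + B = 0 := by
      have h12 : (t₁ - t₂) * (A * (t₁ + t₂) + B) = 0 := by linear_combination e₁ - e₂
      rcases mul_eq_zero.mp h12 with h'|h'
      · exact absurd (by linarith [sub_eq_zero.mp h']) hne
      · exact h'
    have hA : A ≠ 0 := by
      intro hA0
      apply h
      refine ⟨hA0, ?_⟩
      rw [hA0] at hAB; linarith
    have hC : C = A * (t₁ * t₂) := by linear_combination e₁ - t₁ * hAB
    have hsubset : s ⊆ {t₁, t₂} := by
      intro t ht
      have e : A * t ^ 2 + B * t + C = 0 := ht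
      have : A * ((t - t₁) * (t - t₂)) = 0 := by linear_combination e - t * hAB - hC
      rcases mul_eq_zero.mp this with h'|h'
      · exact absurd h' hA
      · rcases mul_eq_zero.mp h' with h''|h''
        · exact Or.inl (sub_eq_zero.mp h'')
        · exact Or.inr (sub_eq_zero.mp h'')
    exact ((Set.finite_singleton t₂).insert t₁).subset hsubset
lemma cross_anti (u v : Pt) : cross u v = - cross v u := by simp only [cross]; ring

lemma col3_trans {a b x y : Pt} (hab : a ≠ b) (h1 : Col3 a b x) (h2 : Col3 a b y) :
    Col3 b x y := by
  rw [col3_iff_cross] at h1 h2 ⊢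
  have hv : b - a ≠ 0 := sub_ne_zero.2 (Ne.symm hab)
  have e1 : cross (b - a) (x - b) = 0 := by
    simp only [cross, Prod.fst_sub, Prod.snd_sub] at h1 ⊢
    linear_combination h1
  have e2 : cross (b - a) (y - b) = 0 := by
    simp only [cross, Prod.fst_sub, Prod.snd_sub] at h2 ⊢
    linear_combination h2
  exact par hv e1 e2

lemma col3_endpoint {a b q q' : Pt} (hab : a ≠ b) (hq : Col3 a b q) (hq' : Col3 a b q') :
    Col3 q q' a :=
  col3_rotate (col3_trans (Ne.symm hab) (col3_comm_left hq) (col3_comm_left hq'))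

lemma col3_of_line {q q' x y z : Pt} (hqq : q ≠ q') (hx : Col3 q q' x) (hy : Col3 q q' y)
    (hz : Col3 q q' z) : Col3 x y z := by
  by_cases h : q' = x
  · subst h
    exact col3_trans hqq hy hz
  · exact col3_trans h (col3_trans hqq hx hy) (col3_trans hqq hx hz)

lemma sym2_exists_rep {α : Type*} (t : Sym2 α) : ∃ x y, t = s(x, y) := by
  induction t using Sym2.ind with | _ x y => exact ⟨x, y, rfl⟩

lemma mem_sym2_rep {α : Type*} {u : α} {t : Sym2 α} (h : u ∈ t) : ∃ x, t = s(u, x) := by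
  obtain ⟨a, b, rfl⟩ := sym2_exists_rep t
  rcases Sym2.mem_iff.mp h with rfl | rfl
  · exact ⟨b, rfl⟩
  · exact ⟨a, Sym2.eq_swap⟩

lemma genPos_mono {S T : Set Pt} (h : S ⊆ T) (hT : GenPos T) : GenPos S :=
  ⟨fun a ha b hb c hc => hT.1 a (h ha) b (h hb) c (h hc),
   fun s₁ s₂ s₃ h₁ h₂ h₃ => hT.2 s₁ s₂ s₃ (fun x hx => h (h₁ x hx)) (fun x hx => h (h₂ x hx))
     (fun x hx => h (h₃ x hx))⟩

/-- A point of `S` lying on a segment over `S` is an endpoint. -/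
lemma mem_of_on_seg {S : Set Pt} (hgp : GenPos S) {s : Sym2 Pt} (hs : ∀ x ∈ s, x ∈ S)
    {q : Pt} (hqS : q ∈ S) (hq : q ∈ segOf s) : q ∈ s := by
  obtain ⟨a, b, rfl⟩ := sym2_exists_rep s
  rw [segOf_mk] at hq
  by_cases hab : a = b
  · subst hab
    rw [segment_same] at hq
    rw [hq]; exact Sym2.mem_mk_left a a
  · by_cases hqa : q = a
    · rw [hqa]; exact Sym2.mem_mk_left a b
    by_cases hqb : q = b
    · rw [hqb]; exact Sym2.mem_mk_right a b
    exact absurd (col3_of_mem_segment hq)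
      (hgp.1 a (hs a (Sym2.mem_mk_left a b)) b (hs b (Sym2.mem_mk_right a b)) q hqS hab
        (fun h => hqa h.symm) (fun h => hqb h.symm))

/-- Two distinct segments over a set in general position meet in at most one point. -/
lemma seg_inter_subsingleton {S : Set Pt} (hgp : GenPos S) {s t : Sym2 Pt}
    (hs : ∀ x ∈ s, x ∈ S) (ht : ∀ x ∈ t, x ∈ S) (hst : s ≠ t) :
    (segOf s ∩ segOf t).Subsingleton := by
  obtain ⟨a, b, rfl⟩ := sym2_exists_rep s
  obtain ⟨c, d, rfl⟩ := sym2_exists_rep t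
  intro q hq q' hq' 
  by_contra hne
  simp only [segOf_mk] at hq hq'
  have haS := hs a (Sym2.mem_mk_left a b); have hbS := hs b (Sym2.mem_mk_right a b)
  have hcS := ht c (Sym2.mem_mk_left c d); have hdS := ht d (Sym2.mem_mk_right c d)
  have hab : a ≠ b := by
    rintro rfl
    rw [segment_same] at hq hq'
    exact hne ((Set.eq_of_mem_singleton hq.1).trans (Set.eq_of_mem_singleton hq'.1).symm)
  have hcd : c ≠ d := by
    rintro rfl
    rw [segment_same] at hq hq'
    exact hne ((Set.eq_of_mem_singleton hq.2).trans (Set.eq_of_mem_singleton hq'.2).symm)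
  have hLa : Col3 q q' a := col3_endpoint hab (col3_of_mem_segment hq.1) (col3_of_mem_segment hq'.1)
  have hLb : Col3 q q' b := col3_endpoint (Ne.symm hab)
    (col3_comm_left (col3_of_mem_segment hq.1))
    (col3_comm_left (col3_of_mem_segment hq'.1))
  have hLc : Col3 q q' c := col3_endpoint hcd (col3_of_mem_segment hq.2) (col3_of_mem_segment hq'.2)
  have hLd : Col3 q q' d := col3_endpoint (Ne.symm hcd)
    (col3_comm_left (col3_of_mem_segment hq.2))
    (col3_comm_left (col3_of_mem_segment hq'.2))
  -- find three distinct points among a, b, c, d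
  by_cases hca : c = a
  · -- then d ∉ {a, b} (else segments equal)
    have hd : d ≠ a ∧ d ≠ b := by
      constructor
      · rintro rfl; exact hcd hca
      · rintro rfl; exact hst (by rw [hca])
    exact hgp.1 a haS b hbS d hdS hab (Ne.symm hd.1) (Ne.symm hd.2)
      (col3_of_line hne hLa hLb hLd)
  · by_cases hcb : c = b
    · have hd : d ≠ a ∧ d ≠ b := by
        constructor
        · rintro rfl; exact hst (by rw [hcb]; exact Sym2.eq_swap)
        · rintro rfl; exact hcd hcb
      exact hgp.1 a haS b hbS d hdS hab (Ne.symm hd.1) (Ne.symm hd.2)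
        (col3_of_line hne hLa hLb hLd)
    · exact hgp.1 a haS b hbS c hcS hab (Ne.symm hca) (Ne.symm hcb)
        (col3_of_line hne hLa hLb hLc)

def sym2Over (S : Set Pt) : Set (Sym2 Pt) := {s | ∀ x ∈ s, x ∈ S}

lemma sym2Over_finite {S : Set Pt} (hS : S.Finite) : (sym2Over S).Finite := by
  apply ((hS.prod hS).image (fun p : Pt × Pt => s(p.1, p.2))).subset
  intro s hs
  obtain ⟨a, b, rfl⟩ := sym2_exists_rep s
  exact ⟨(a, b), ⟨hs a (Sym2.mem_mk_left a b), hs b (Sym2.mem_mk_right a b)⟩, rfl⟩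

def crossPts (S : Set Pt) : Set Pt :=
  {q | q ∉ S ∧ ∃ s t : Sym2 Pt, s ∈ sym2Over S ∧ t ∈ sym2Over S ∧ s ≠ t ∧
    q ∈ segOf s ∧ q ∈ segOf t}

lemma crossPts_finite {S : Set Pt} (hS : S.Finite) (hgp : GenPos S) : (crossPts S).Finite := by
  have : crossPts S ⊆ ⋃ s ∈ sym2Over S, ⋃ t ∈ sym2Over S,
      {q | s ≠ t ∧ q ∈ segOf s ∩ segOf t} := by
    rintro q ⟨-, s, t, hsm, htm, hst, hq1, hq2⟩
    exact Set.mem_biUnion hsm (Set.mem_biUnion htm ⟨hst, hq1, hq2⟩)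
  apply Set.Finite.subset _ this
  apply (sym2Over_finite hS).biUnion
  intro s hsm
  apply (sym2Over_finite hS).biUnion
  intro t htm
  by_cases hst : s = t
  · have : {q | s ≠ t ∧ q ∈ segOf s ∩ segOf t} = ∅ := by
      ext q; simp [hst]
    rw [this]; exact Set.finite_empty
  · have : {q | s ≠ t ∧ q ∈ segOf s ∩ segOf t} ⊆ segOf s ∩ segOf t := fun q hq => hq.2
    exact ((seg_inter_subsingleton hgp hsm htm hst).finite).subset this

/-- Existence of a point in a ball avoiding finitely many lines. -/
lemma exists_avoid {L : Set (Pt × Pt)} (hL : L.Finite) (hLne : ∀ l ∈ L, l.1 ≠ l.2)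
    (c : Pt) {r : ℝ} (hr : 0 < r) :
    ∃ u : Pt, dist u c < r ∧ ∀ l ∈ L, ¬ Col3 l.1 l.2 u := by
  set pt : ℝ → Pt := fun t => (c.1 + (r / 2) * t, c.2 + (r / 2) * t ^ 2) with hpt
  have key : ∀ l ∈ L, {t : ℝ | Col3 l.1 l.2 (pt t)}.Finite := by
    intro l hl
    have hne := hLne l hl
    have hd : l.2 - l.1 ≠ 0 := sub_ne_zero.2 (Ne.symm hne)
    have hAB : ¬ ((r / 2) * (l.2.1 - l.1.1) = 0 ∧ (-(r / 2) * (l.2.2 - l.1.2)) = 0) := by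
      rintro ⟨hA, hB⟩
      have hr2 : (r / 2) ≠ 0 := by positivity
      have h1 : l.2.1 - l.1.1 = 0 := by
        rcases mul_eq_zero.mp hA with h | h
        · exact absurd h hr2
        · exact h
      have h2 : l.2.2 - l.1.2 = 0 := by
        rcases mul_eq_zero.mp hB with h | h
        · exact absurd (neg_eq_zero.mp h) hr2
        · exact h
      exact hne (Prod.ext (by linarith) (by linarith))
    apply (quad_roots_finite hAB).subset
    intro t ht
    have hc := col3_iff_cross.mp ht
    simp only [cross, Prod.fst_sub, Prod.snd_sub, hpt] at hc
    show (r / 2) * (l.2.1 - l.1.1) * t ^ 2 + (-(r / 2) * (l.2.2 - l.1.2)) * t +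
      ((l.2.1 - l.1.1) * (c.2 - l.1.2) - (l.2.2 - l.1.2) * (c.1 - l.1.1)) = 0
    linear_combination hc
  have hbad : (⋃ l ∈ L, {t : ℝ | Col3 l.1 l.2 (pt t)}).Finite := hL.biUnion key
  obtain ⟨t, htmem⟩ := ((Set.Ioo_infinite (by norm_num : (0:ℝ) < 1)).diff hbad).nonempty
  obtain ⟨⟨ht0, ht1⟩, htbad⟩ := htmem
  refine ⟨pt t, ?_, ?_⟩
  · have ht2 : 0 < t ^ 2 := by positivity
    have ht2' : t ^ 2 < 1 := by nlinarith
    rw [Prod.dist_eq]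
    simp only [hpt]
    rw [Real.dist_eq, Real.dist_eq]
    have e1 : |c.1 + r / 2 * t - c.1| = r / 2 * t := by
      rw [show c.1 + r / 2 * t - c.1 = r / 2 * t by ring, abs_of_pos (by positivity)]
    have e2 : |c.2 + r / 2 * t ^ 2 - c.2| = r / 2 * t ^ 2 := by
      rw [show c.2 + r / 2 * t ^ 2 - c.2 = r / 2 * t ^ 2 by ring, abs_of_pos (by positivity)]
    rw [e1, e2]
    apply max_lt <;> nlinarith
  · intro l hl hcol
    exact htbad (Set.mem_biUnion hl hcol)
lemma not_mem_segOf {S : Set Pt} {u : Pt} (huS : u ∉ S)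
    (havS : ∀ a ∈ S, ∀ b ∈ S, a ≠ b → ¬ Col3 a b u)
    {s : Sym2 Pt} (hs : ∀ x ∈ s, x ∈ S) : u ∉ segOf s := by
  obtain ⟨a, b, rfl⟩ := sym2_exists_rep s
  rw [segOf_mk]
  intro hmem
  have haS := hs a (Sym2.mem_mk_left a b); have hbS := hs b (Sym2.mem_mk_right a b)
  by_cases hab : a = b
  · subst hab
    rw [segment_same] at hmem
    exact huS (hmem ▸ haS)
  · exact havS a haS b hbS hab (col3_of_mem_segment hmem)

lemma mem_insert_not_u {S : Set Pt} {u : Pt} {s : Sym2 Pt}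
    (h : ∀ y ∈ s, y ∈ insert u S) (hu : u ∉ s) : ∀ y ∈ s, y ∈ S := by
  intro y hy
  rcases Set.mem_insert_iff.mp (h y hy) with rfl | hyS
  · exact absurd hy hu
  · exact hyS

/-- Case: exactly one of the three `Sym2`s contains the new point. -/
lemma helperA {S : Set Pt} {u : Pt} (hgp : GenPos S) (huS : u ∉ S)
    (havS : ∀ a ∈ S, ∀ b ∈ S, a ≠ b → ¬ Col3 a b u)
    (havX : ∀ z ∈ crossPts S, ∀ x ∈ S, ¬ Col3 z x u)
    {s₁ s₂ s₃ : Sym2 Pt} (m1 : u ∈ s₁)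
    (h₁ : ∀ x ∈ s₁, x ∈ insert u S) (h₂ : ∀ x ∈ s₂, x ∈ S) (h₃ : ∀ x ∈ s₃, x ∈ S)
    (h23 : s₂ ≠ s₃) {q : Pt}
    (hq1 : q ∈ segOf s₁) (hq2 : q ∈ segOf s₂) (hq3 : q ∈ segOf s₃) :
    ∃ z, z ∈ s₁ ∧ z ∈ s₂ ∧ z ∈ s₃ := by
  obtain ⟨x, rfl⟩ := mem_sym2_rep m1
  have hqu : q ≠ u := by
    rintro rfl
    exact not_mem_segOf huS havS h₂ hq2
  rw [segOf_mk] at hq1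
  by_cases hxu : x = u
  · subst hxu
    rw [segment_same] at hq1
    exact absurd hq1 hqu
  have hxS : x ∈ S := by
    rcases Set.mem_insert_iff.mp (h₁ x (Sym2.mem_mk_right u x)) with h | h
    · exact absurd h hxu
    · exact h
  have hcol : Col3 u x q := col3_of_mem_segment hq1
  by_cases hqS : q ∈ S
  · have hq2' : q ∈ s₂ := mem_of_on_seg hgp h₂ hqS hq2
    have hq3' : q ∈ s₃ := mem_of_on_seg hgp h₃ hqS hq3
    by_cases hqx : q = x
    · subst hqx
      exact ⟨q, Sym2.mem_mk_right u q, hq2', hq3'⟩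
    · exact absurd (col3_rotate hcol) (havS x hxS q hqS (fun h => hqx h.symm))
  · have hqX : q ∈ crossPts S := ⟨hqS, s₂, s₃, h₂, h₃, h23, hq2, hq3⟩
    have hqx : q ≠ x := fun h => hqS (h ▸ hxS)
    exact absurd (col3_comm_left (col3_rotate hcol)) (havX q hqX x hxS)

/-- Case: exactly two of the three `Sym2`s contain the new point: impossible. -/
lemma helperB {S : Set Pt} {u : Pt} (huS : u ∉ S)
    (havS : ∀ a ∈ S, ∀ b ∈ S, a ≠ b → ¬ Col3 a b u)
    {s₁ s₂ s₃ : Sym2 Pt} (m1 : u ∈ s₁) (m2 : u ∈ s₂) (m3 : u ∉ s₃)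
    (h₁ : ∀ x ∈ s₁, x ∈ insert u S) (h₂ : ∀ x ∈ s₂, x ∈ insert u S)
    (h₃ : ∀ x ∈ s₃, x ∈ insert u S) (h12 : s₁ ≠ s₂) {q : Pt}
    (hq1 : q ∈ segOf s₁) (hq2 : q ∈ segOf s₂) (hq3 : q ∈ segOf s₃) : False := by
  have h₃S := mem_insert_not_u h₃ m3
  obtain ⟨x, rfl⟩ := mem_sym2_rep m1
  obtain ⟨y, rfl⟩ := mem_sym2_rep m2
  have hqu : q ≠ u := by
    rintro rfl
    exact not_mem_segOf huS havS h₃S hq3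
  rw [segOf_mk] at hq1 hq2
  by_cases hxu : x = u
  · subst hxu; rw [segment_same] at hq1; exact hqu hq1
  by_cases hyu : y = u
  · subst hyu; rw [segment_same] at hq2; exact hqu hq2
  have hxS : x ∈ S := by
    rcases Set.mem_insert_iff.mp (h₁ x (Sym2.mem_mk_right u x)) with h | h
    · exact absurd h hxu
    · exact h
  have hyS : y ∈ S := by
    rcases Set.mem_insert_iff.mp (h₂ y (Sym2.mem_mk_right u y)) with h | h
    · exact absurd h hyu
    · exact h
  have hxy : x ≠ y := by
    rintro rfl; exact h12 rfl
  have hc1 : cross (x - u) (q - u) = 0 := col3_iff_cross.mp (col3_of_mem_segment hq1)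
  have hc2 : cross (y - u) (q - u) = 0 := col3_iff_cross.mp (col3_of_mem_segment hq2)
  have hv : q - u ≠ 0 := sub_ne_zero.2 hqu
  have hc1' : cross (q - u) (x - u) = 0 := by rw [cross_anti, hc1, neg_zero]
  have hc2' : cross (q - u) (y - u) = 0 := by rw [cross_anti, hc2, neg_zero]
  have : cross (x - u) (y - u) = 0 := par hv hc1' hc2'
  exact havS x hxS y hyS hxy (col3_rotate (col3_iff_cross.mpr this))

/-- One can add a point to a finite set in general position, inside any ball. -/
lemma add_point {S : Set Pt} (hfin : S.Finite) (hgp : GenPos S) (c : Pt) {r : ℝ}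
    (hr : 0 < r) : ∃ u, dist u c < r ∧ u ∉ S ∧ GenPos (insert u S) := by
  classical
  set L : Set (Pt × Pt) :=
    {l | l.1 ∈ S ∧ l.2 ∈ S ∧ l.1 ≠ l.2}
    ∪ {l | l.1 ∈ crossPts S ∧ l.2 ∈ S}
    ∪ (fun x : Pt => (x, x + (1, 0))) '' S with hLdef
  have hLfin : L.Finite := by
    refine (Set.Finite.union (Set.Finite.union ?_ ?_) (hfin.image _))
    · exact ((hfin.prod hfin).subset (fun l hl => ⟨hl.1, hl.2.1⟩))
    · exact (((crossPts_finite hfin hgp).prod hfin).subset (fun l hl => ⟨hl.1, hl.2⟩))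
  have hLne : ∀ l ∈ L, l.1 ≠ l.2 := by
    rintro l ((⟨h1, h2, h3⟩ | ⟨h1, h2⟩) | ⟨x, hx, rfl⟩)
    · exact h3
    · exact fun h => h1.1 (h ▸ h2)
    · intro h
      have h' : x.1 = x.1 + 1 := congrArg Prod.fst h
      linarith
  obtain ⟨u, hu, hav⟩ := exists_avoid hLfin hLne c hr
  have havS : ∀ a ∈ S, ∀ b ∈ S, a ≠ b → ¬ Col3 a b u := by
    intro a ha b hb hab
    exact hav (a, b) (Or.inl (Or.inl ⟨ha, hb, hab⟩))
  have havX : ∀ z ∈ crossPts S, ∀ x ∈ S, ¬ Col3 z x u := by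
    intro z hz x hx
    exact hav (z, x) (Or.inl (Or.inr ⟨hz, hx⟩))
  have huS : u ∉ S := by
    intro h
    apply hav (u, u + (1, 0)) (Or.inr ⟨u, h, rfl⟩)
    have : ({u, u + ((1:ℝ), (0:ℝ)), u} : Set Pt) = {u, u + (1, 0)} := by
      ext z; simp; tauto
    rw [Col3, this]
    exact collinear_pair ℝ _ _
  refine ⟨u, hu, huS, ?_, ?_⟩
  · -- no three points collinear
    intro a ha b hb c' hc hab hac hbc
    rcases Set.mem_insert_iff.mp ha with rfl | ha'
    · rcases Set.mem_insert_iff.mp hb with rfl | hb'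
      · exact absurd rfl hab
      rcases Set.mem_insert_iff.mp hc with rfl | hc'
      · exact absurd rfl hac
      · intro hcol
        exact havS b hb' c' hc' hbc (col3_rotate (show Col3 a b c' from hcol))
    · rcases Set.mem_insert_iff.mp hb with rfl | hb'
      · rcases Set.mem_insert_iff.mp hc with rfl | hc'
        · exact absurd rfl hbc
        · intro hcol
          exact havS a ha' c' hc' hac
            (col3_rotate (col3_comm_left (show Col3 a b c' from hcol)))
      · rcases Set.mem_insert_iff.mp hc with rfl | hc'
        · intro hcol
          exact havS a ha' b hb' hab (show Col3 a b c' from hcol)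
        · exact hgp.1 a ha' b hb' c' hc' hab hac hbc
  · -- clause 2
    intro s₁ s₂ s₃ h₁ h₂ h₃ h12 h13 h23 q hq1 hq2 hq3
    by_cases m1 : u ∈ s₁ <;> by_cases m2 : u ∈ s₂ <;> by_cases m3 : u ∈ s₃
    · exact ⟨u, m1, m2, m3⟩
    · exact (helperB huS havS m1 m2 m3 h₁ h₂ h₃ h12 hq1 hq2 hq3).elim
    · exact (helperB huS havS m1 m3 m2 h₁ h₃ h₂ h13 hq1 hq3 hq2).elim
    · obtain ⟨z, hz1, hz2, hz3⟩ := helperA hgp huS havS havX m1 h₁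
        (mem_insert_not_u h₂ m2) (mem_insert_not_u h₃ m3) h23 hq1 hq2 hq3
      exact ⟨z, hz1, hz2, hz3⟩
    · exact (helperB huS havS m2 m3 m1 h₂ h₃ h₁ h23 hq2 hq3 hq1).elim
    · obtain ⟨z, hz1, hz2, hz3⟩ := helperA hgp huS havS havX m2 h₂
        (mem_insert_not_u h₁ m1) (mem_insert_not_u h₃ m3) h13 hq2 hq1 hq3
      exact ⟨z, hz2, hz1, hz3⟩
    · obtain ⟨z, hz1, hz2, hz3⟩ := helperA hgp huS havS havX m3 h₃
        (mem_insert_not_u h₁ m1) (mem_insert_not_u h₂ m2) h12 hq3 hq1 hq2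
      exact ⟨z, hz2, hz3, hz1⟩
    · exact hgp.2 s₁ s₂ s₃ (mem_insert_not_u h₁ m1) (mem_insert_not_u h₂ m2)
        (mem_insert_not_u h₃ m3) h12 h13 h23 q hq1 hq2 hq3

/-- Placement of finitely many points near targets, keeping general position. -/
lemma place {W : Type} [DecidableEq W] {S0 : Set Pt} (h0fin : S0.Finite) (h0 : GenPos S0)
    (tgt : W → Pt) {ε : ℝ} (hε : 0 < ε) (L : Finset W) :
    ∃ f : W → Pt, (∀ w ∈ L, dist (f w) (tgt w) < ε) ∧ (∀ w ∈ L, f w ∉ S0) ∧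
      Set.InjOn f ↑L ∧ GenPos (S0 ∪ f '' ↑L) := by
  classical
  induction L using Finset.induction_on with
  | empty =>
    refine ⟨fun _ => 0, by simp, by simp, by simp, ?_⟩
    simpa using h0
  | @insert a L ha ih =>
    obtain ⟨f, hf1, hf2, hf3, hf4⟩ := ih
    have hfin : (S0 ∪ f '' ↑L).Finite := h0fin.union ((L.finite_toSet).image f)
    obtain ⟨u, hu1, hu2, hu3⟩ := add_point hfin hf4 (tgt a) hε
    have himg : (Function.update f a u) '' ↑(insert a L) = insert u (f '' ↑L) := by
      rw [Finset.coe_insert, Set.image_insert_eq, Function.update_self]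
      congr 1
      apply Set.image_congr
      intro x hx
      have hxne : x ≠ a := fun h => ha (h ▸ hx)
      exact Function.update_of_ne hxne u f
    refine ⟨Function.update f a u, ?_, ?_, ?_, ?_⟩
    · intro w hw
      rcases Finset.mem_insert.mp hw with hwa | hw'
      · rw [hwa, Function.update_self]; exact hu1
      · have hwne : w ≠ a := fun h => ha (h ▸ hw')
        rw [Function.update_of_ne hwne u f]
        exact hf1 w hw'
    · intro w hw
      rcases Finset.mem_insert.mp hw with hwa | hw'
      · rw [hwa, Function.update_self]; exact fun h => hu2 (Or.inl h)
      · have hwne : w ≠ a := fun h => ha (h ▸ hw')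
        rw [Function.update_of_ne hwne u f]
        exact hf2 w hw'
    · intro x hx y hy hxy
      rcases Finset.mem_insert.mp (Finset.mem_coe.mp hx) with hxa | hx''
      · rcases Finset.mem_insert.mp (Finset.mem_coe.mp hy) with hya | hy''
        · rw [hxa, hya]
        · exfalso
          have hyne : y ≠ a := fun h => ha (h ▸ hy'')
          rw [hxa, Function.update_self, Function.update_of_ne hyne u f] at hxy
          exact hu2 (Or.inr ⟨y, hy'', hxy.symm⟩)
      · rcases Finset.mem_insert.mp (Finset.mem_coe.mp hy) with hya | hy''
        · exfalso
          have hxne : x ≠ a := fun h => ha (h ▸ hx'')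
          rw [hya, Function.update_self, Function.update_of_ne hxne u f] at hxy
          exact hu2 (Or.inr ⟨x, hx'', hxy⟩)
        · have hxne : x ≠ a := fun h => ha (h ▸ hx'')
          have hyne : y ≠ a := fun h => ha (h ▸ hy'')
          rw [Function.update_of_ne hxne u f, Function.update_of_ne hyne u f] at hxy
          exact hf3 hx'' hy'' hxy
    · rw [himg, Set.union_insert]
      exact hu3
lemma isCompact_segOf (s : Sym2 Pt) : IsCompact (segOf s) := by
  obtain ⟨a, b, rfl⟩ := sym2_exists_rep s
  rw [segOf_mk, segment_eq_image']
  exact isCompact_Icc.image (by continuity)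

lemma seg_subset_thickening {a a' b : Pt} {ε : ℝ} (h : dist a a' < ε) :
    segment ℝ a b ⊆ Metric.thickening ε (segment ℝ a' b) := by
  intro x hx
  obtain ⟨t, ht0, ht1, rfl⟩ := mem_segment_rep hx
  rw [Metric.mem_thickening_iff]
  refine ⟨a' + t • (b - a'), ?_, ?_⟩
  · rw [segment_eq_image']
    exact ⟨t, ⟨ht0, ht1⟩, rfl⟩
  · have hsub : (a + t • (b - a)) - (a' + t • (b - a')) = (1 - t) • (a - a') := by
      apply Prod.ext <;>
        simp only [Prod.fst_sub, Prod.snd_sub, Prod.fst_add, Prod.snd_add,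
          Prod.smul_fst, Prod.smul_snd, smul_eq_mul] <;> ring
    rw [dist_eq_norm, hsub, norm_smul]
    have h1 : |1 - t| ≤ 1 := by rw [abs_of_nonneg (by linarith)]; linarith
    calc ‖(1 : ℝ) - t‖ * ‖a - a'‖ ≤ 1 * ‖a - a'‖ := by
          apply mul_le_mul_of_nonneg_right _ (norm_nonneg _)
          rw [Real.norm_eq_abs]; exact h1
      _ = dist a a' := by rw [one_mul, dist_eq_norm]
      _ < ε := h

lemma card_le_mul {α β : Type*} [Finite α] [Finite β] (f : α → β) {n : ℕ}
    (h : ∀ b, Nat.card {a : α // f a = b} ≤ n) : Nat.card α ≤ n * Nat.card β := by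
  cases nonempty_fintype α
  cases nonempty_fintype β
  classical
  rw [Nat.card_eq_fintype_card, Nat.card_eq_fintype_card]
  rw [← Fintype.card_congr (Equiv.sigmaFiberEquiv f)]
  rw [Fintype.card_sigma]
  calc ∑ b : β, Fintype.card {a // f a = b}
      ≤ ∑ _b : β, n := Finset.sum_le_sum (fun b _ => by
        rw [← Nat.card_eq_fintype_card]; exact h b)
    _ = Fintype.card β * n := by rw [Finset.sum_const, smul_eq_mul, Finset.card_univ]
    _ = n * Fintype.card β := mul_comm _ _

lemma card_subset_le {γ : Type*} [Finite γ] {s t : Set γ} (h : s ⊆ t) :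
    Nat.card s ≤ Nat.card t := by
  rw [Nat.card_coe_set_eq, Nat.card_coe_set_eq]
  exact Set.ncard_le_ncard h (Set.toFinite t)

lemma card_union_le' {γ : Type*} [Finite γ] (s t : Set γ) :
    Nat.card ↥(s ∪ t) ≤ Nat.card s + Nat.card t := by
  rw [Nat.card_coe_set_eq, Nat.card_coe_set_eq, Nat.card_coe_set_eq]
  exact Set.ncard_union_le s t

lemma deg_le_maxDeg {V E : Type} [Finite V] (K : Multigraph V E) (v : V) :
    K.deg v ≤ K.maxDeg :=
  le_csSup ((Set.finite_range K.deg).bddAbove) ⟨v, rfl⟩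

lemma shadow_nondeg {V : Type} {p : V → Pt} (hinj : Function.Injective p)
    (hgp : GenPos (Set.range p)) {a : V} {t : Sym2 V}
    (hdisj : ∀ v : V, ¬ (v ∈ (s(a, a) : Sym2 V) ∧ v ∈ t)) {x0 : Pt}
    (h1 : x0 ∈ segOf ((s(a, a) : Sym2 V).map p)) (h2 : x0 ∈ segOf (t.map p)) : False := by
  obtain ⟨b₁, b₂, rfl⟩ := sym2_exists_rep t
  rw [Sym2.map_pair_eq, segOf_mk, segment_same] at h1
  rw [Sym2.map_pair_eq, segOf_mk] at h2
  have hx0 : x0 = p a := Set.eq_of_mem_singleton h1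
  subst hx0
  have hab1 : a ≠ b₁ := by
    rintro rfl
    exact hdisj a ⟨Sym2.mem_mk_left a a, Sym2.mem_mk_left a b₂⟩
  have hab2 : a ≠ b₂ := by
    rintro rfl
    exact hdisj a ⟨Sym2.mem_mk_left a a, Sym2.mem_mk_right b₁ a⟩
  by_cases hb : b₁ = b₂
  · subst hb
    rw [segment_same] at h2
    exact hab1 (hinj (Set.eq_of_mem_singleton h2))
  · exact hgp.1 (p b₁) ⟨b₁, rfl⟩ (p b₂) ⟨b₂, rfl⟩ (p a) ⟨a, rfl⟩
      (fun h' => hb (hinj h')) (fun h' => hab1 (hinj h').symm) (fun h' => hab2 (hinj h').symm)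
      (col3_of_mem_segment h2)

lemma arith1 (n : ℕ) : n + n * n ≤ n ^ 3 + 1 := by
  rcases Nat.eq_zero_or_pos n with h | h
  · simp [h]
  · obtain ⟨d, rfl⟩ := Nat.exists_eq_succ_of_ne_zero h.ne'
    have hkey : (d + 1) + (d + 1) * (d + 1) + (d ^ 3 + 2 * d ^ 2) = (d + 1) ^ 3 + 1 := by
      ring
    exact Nat.le.intro hkey

lemma arith2 (n : ℕ) : 4 * n ^ 2 ≤ (n + 1) ^ 4 := by
  have hkey : 4 * n ^ 2 + (n ^ 4 + 4 * n ^ 3 + 2 * n ^ 2 + 4 * n + 1) = (n + 1) ^ 4 := by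
    ring
  exact Nat.le.intro hkey

lemma crossingPair_symm {V E : Type} (K : Multigraph V E) (p : V → Pt) {e f : E}
    (h : K.CrossingPair p e f) : K.CrossingPair p f e :=
  ⟨fun v hv => h.1 v ⟨hv.2, hv.1⟩, by rw [Set.inter_comm]; exact h.2⟩
end RcrAux
end
/-- For `k ≥ 1`, every `(≤k)`-simplicial blowup `Q` of a finite simple
graph `G` satisfies `rcr(Q) ≤ (Δ(Q) + 1)⁴ · rcr(G) + 2 · Δ(Q)³ · ‖Q‖`. -/
theorem rcr_of_simplicialBlowup (k : ℕ) (hk : 1 ≤ k) {V : Type} [Fintype V]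
    (G : SimpleGraph V) {W F : Type} [Fintype W] [Fintype F] (Q : Multigraph W F)
    (h : IsSimplicialBlowup k G Q) :
    Q.rcr ≤ (Q.maxDeg + 1) ^ 4 * G.rcr + 2 * Q.maxDeg ^ 3 * Q.edgeCount := by
  classical
  open RcrAux in
  by_cases hQset : {n | ∃ p : W → ℝ × ℝ, Q.IsRectDrawing p ∧ Q.crossCount p = n}.Nonempty
  case neg =>
    have h0 : Q.rcr = 0 := by
      show sInf _ = 0
      rw [Set.not_nonempty_iff_eq_empty.mp hQset, Nat.sInf_empty]
    rw [h0]; exact Nat.zero_le _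
  case pos =>
  obtain ⟨n₀, p₀, hp₀, -⟩ := hQset
  obtain ⟨ι, C, hι, hclique, hedge3, hedge4, hedge5, -⟩ := h
  have hGdraw : G.toMulti.IsRectDrawing (p₀ ∘ ι) :=
    ⟨hp₀.1.comp hι, RcrAux.genPos_mono (by rintro x ⟨a, rfl⟩; exact ⟨ι a, rfl⟩) hp₀.2⟩
  have hGne : {n | ∃ p : V → ℝ × ℝ,
      G.toMulti.IsRectDrawing p ∧ G.toMulti.crossCount p = n}.Nonempty :=
    ⟨G.toMulti.crossCount (p₀ ∘ ι), p₀ ∘ ι, hGdraw, rfl⟩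
  obtain ⟨p, hpdraw, hpcount⟩ := Nat.sInf_mem hGne
  have hpc : G.toMulti.crossCount p = G.rcr := hpcount
  set Δ := Q.maxDeg with hΔdef
  set sh : Sym2 V → Set (ℝ × ℝ) := fun t => segOf (t.map p) with hshdef
  have hsep : ∀ ef : Sym2 V × Sym2 V, ∃ δ : ℝ, 0 < δ ∧
      (sh ef.1 ∩ sh ef.2 = ∅ →
        Disjoint (Metric.thickening δ (sh ef.1)) (Metric.thickening δ (sh ef.2))) := by
    intro ef
    by_cases hyp : sh ef.1 ∩ sh ef.2 = ∅
    · obtain ⟨δ, hδ, hd⟩ := Disjoint.exists_thickenings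
        (Set.disjoint_iff_inter_eq_empty.mpr hyp) (RcrAux.isCompact_segOf _)
        (RcrAux.isCompact_segOf _).isClosed
      exact ⟨δ, hδ, fun _ => hd⟩
    · exact ⟨1, one_pos, fun h' => absurd h' hyp⟩
  choose δf hδf1 hδf2 using hsep
  set Efin : Finset ℝ := insert 1 (Finset.univ.image δf) with hEdef
  have hEne : Efin.Nonempty := ⟨1, Finset.mem_insert_self _ _⟩
  set ε := Efin.min' hEne with hεdef
  have hε : 0 < ε := by
    have hmem := Efin.min'_mem hEne
    rw [← hεdef] at hmem
    rcases Finset.mem_insert.mp hmem with h' | h'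
    · rw [h']; exact one_pos
    · obtain ⟨ef, -, hef⟩ := Finset.mem_image.mp h'
      rw [← hef]; exact hδf1 ef
  have hεle : ∀ ef, ε ≤ δf ef := fun ef =>
    Finset.min'_le _ _ (Finset.mem_insert_of_mem (Finset.mem_image_of_mem δf (Finset.mem_univ ef)))
  -- place the new vertices
  set tgt : W → ℝ × ℝ := fun w => if hw : (C w).Nonempty then p hw.some else 0 with htgtdef
  set Lnew : Finset W := Finset.univ.filter (fun w => w ∉ Set.range ι) with hLdef
  obtain ⟨f, hfdist, hfnotS, hfinj, hfgp⟩ :=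
    RcrAux.place (Set.finite_range p) hpdraw.2 tgt hε Lnew
  set qm : W → ℝ × ℝ := fun w => if hw : w ∈ Set.range ι then p hw.choose else f w with hqdef
  have hqι : ∀ a : V, qm (ι a) = p a := by
    intro a
    have hw : ι a ∈ Set.range ι := ⟨a, rfl⟩
    have h1 : qm (ι a) = p hw.choose := dif_pos hw
    rw [h1]
    congr 1
    exact hι hw.choose_spec
  have hqnew : ∀ w, w ∉ Set.range ι → qm w = f w := fun w hw => dif_neg hw
  have hLmem : ∀ w, w ∉ Set.range ι → w ∈ Lnew :=
    fun w hw => Finset.mem_filter.mpr ⟨Finset.mem_univ w, hw⟩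
  have hrange : Set.range qm = Set.range p ∪ f '' ↑Lnew := by
    apply Set.Subset.antisymm
    · rintro x ⟨w, rfl⟩
      by_cases hw : w ∈ Set.range ι
      · obtain ⟨a, rfl⟩ := hw
        rw [hqι a]; exact Or.inl ⟨a, rfl⟩
      · rw [hqnew w hw]; exact Or.inr ⟨w, Finset.mem_coe.mpr (hLmem w hw), rfl⟩
    · rintro x (⟨a, rfl⟩ | ⟨w, hwL, rfl⟩)
      · exact ⟨ι a, hqι a⟩
      · exact ⟨w, hqnew w (Finset.mem_filter.mp (Finset.mem_coe.mp hwL)).2⟩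
  have hqinj : Function.Injective qm := by
    intro w w' hww
    by_cases hw : w ∈ Set.range ι <;> by_cases hw' : w' ∈ Set.range ι
    · obtain ⟨a, rfl⟩ := hw; obtain ⟨a', rfl⟩ := hw'
      rw [hqι, hqι] at hww
      rw [hpdraw.1 hww]
    · obtain ⟨a, rfl⟩ := hw
      rw [hqι, hqnew w' hw'] at hww
      exact ((hfnotS w' (hLmem w' hw')) ⟨a, hww⟩).elim
    · obtain ⟨a', rfl⟩ := hw'
      rw [hqι, hqnew w hw] at hww
      exact ((hfnotS w (hLmem w hw)) ⟨a', hww.symm⟩).elim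
    · rw [hqnew w hw, hqnew w' hw'] at hww
      exact hfinj (Finset.mem_coe.mpr (hLmem w hw)) (Finset.mem_coe.mpr (hLmem w' hw')) hww
  have hqdraw : Q.IsRectDrawing qm := ⟨hqinj, by rw [hrange]; exact hfgp⟩
  have hrcr_le : Q.rcr ≤ Q.crossCount qm := Nat.sInf_le ⟨qm, hqdraw, rfl⟩
  refine le_trans hrcr_le ?_
  -- the shadow map
  have hσex : ∀ e : F, ∃ t : Sym2 V,
      (∃ a b : V, G.Adj a b ∧ Q.ends e = s(ι a, ι b) ∧ t = s(a, b)) ∨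
      (∃ (u : W) (c : V) (hne : (C u).Nonempty), u ∉ Set.range ι ∧ c ∈ C u ∧
        Q.ends e = s(u, ι c) ∧ t = s(hne.some, c)) := by
    intro e
    rcases hedge4 e with ⟨a, b, hadj, hend⟩ | ⟨u, c, hu, hc, hend⟩
    · exact ⟨s(a, b), Or.inl ⟨a, b, hadj, hend, rfl⟩⟩
    · have hne : (C u).Nonempty := ⟨c, hc⟩
      exact ⟨s(hne.some, c), Or.inr ⟨u, c, hne, hu, hc, hend, rfl⟩⟩
  choose σ hσ using hσex
  -- each drawn edge lies in the ε-thickening of its shadow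
  have hthick : ∀ e : F, segOf ((Q.ends e).map qm) ⊆ Metric.thickening ε (sh (σ e)) := by
    intro e
    rcases hσ e with ⟨a, b, hadj, hend, hσe⟩ | ⟨u, c, hne, hu, hc, hend, hσe⟩
    · rw [hend, hσe, hshdef]
      simp only [Sym2.map_pair_eq, RcrAux.segOf_mk, hqι]
      exact Metric.self_subset_thickening hε _
    · rw [hend, hσe, hshdef]
      simp only [Sym2.map_pair_eq, RcrAux.segOf_mk, hqι]
      have h1 : qm u = f u := hqnew u hu
      have h2 : tgt u = p hne.some := dif_pos hne
      have h3 : dist (qm u) (p hne.some) < ε := by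
        rw [h1, ← h2]; exact hfdist u (hLmem u hu)
      exact RcrAux.seg_subset_thickening h3
  -- transfer of crossings with vertex-disjoint shadows
  have hσadj : ∀ (e : F) (a₁ a₂ : V), σ e = s(a₁, a₂) → a₁ ≠ a₂ → G.Adj a₁ a₂ := by
    intro e a₁ a₂ hrep hne12
    rcases hσ e with ⟨a, b, hadj, hend, hσe⟩ | ⟨u, c, hne, hu, hc, hend, hσe⟩
    · rw [hσe] at hrep
      rcases Sym2.eq_iff.mp hrep with ⟨h1, h2⟩ | ⟨h1, h2⟩
      · rw [← h1, ← h2]; exact hadj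
      · rw [← h1, ← h2]; exact hadj.symm
    · rw [hσe] at hrep
      have hclq := (hclique u hu).1
      have hsm : hne.some ∈ C u := hne.some_mem
      rcases Sym2.eq_iff.mp hrep with ⟨h1, h2⟩ | ⟨h1, h2⟩
      · rw [← h1, ← h2]; exact hclq hsm hc (by rw [h1, h2]; exact hne12)
      · rw [← h1, ← h2]; exact hclq hc hsm (by rw [h1, h2]; exact hne12)
  have hNoCross : ∀ g h' : F, Q.CrossingPair qm g h' →
      (∀ v : V, ¬ (v ∈ σ g ∧ v ∈ σ h')) →
      ∃ e' f' : G.edgeSet, (e' : Sym2 V) = σ g ∧ (f' : Sym2 V) = σ h' ∧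
        G.toMulti.CrossingPair p e' f' := by
    intro g h' hcr hdisj
    have hint : ¬ (sh (σ g) ∩ sh (σ h') = ∅) := by
      intro hempty
      have hd := hδf2 (σ g, σ h') hempty
      have hd' : Disjoint (Metric.thickening ε (sh (σ g)))
          (Metric.thickening ε (sh (σ h'))) :=
        hd.mono (Metric.thickening_mono (hεle (σ g, σ h')) _)
          (Metric.thickening_mono (hεle (σ g, σ h')) _)
      obtain ⟨x, hx1, hx2⟩ := hcr.2
      exact Set.disjoint_left.mp hd' (hthick g hx1) (hthick h' hx2)
    obtain ⟨x0, hx01, hx02⟩ := Set.nonempty_iff_ne_empty.mpr hint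
    rw [hshdef] at hx01 hx02
    obtain ⟨a₁, a₂, hga⟩ := RcrAux.sym2_exists_rep (σ g)
    obtain ⟨b₁, b₂, hgb⟩ := RcrAux.sym2_exists_rep (σ h')
    have hnea : a₁ ≠ a₂ := by
      rintro rfl
      exact RcrAux.shadow_nondeg hpdraw.1 hpdraw.2 (by rw [← hga]; exact hdisj)
        (by rw [← hga]; exact hx01) hx02
    have hneb : b₁ ≠ b₂ := by
      rintro rfl
      exact RcrAux.shadow_nondeg hpdraw.1 hpdraw.2
        (fun v hv => hdisj v ⟨hv.2, by rw [hgb]; exact hv.1⟩)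
        (by rw [← hgb]; exact hx02) hx01
    have hadja : G.Adj a₁ a₂ := hσadj g a₁ a₂ hga hnea
    have hadjb : G.Adj b₁ b₂ := hσadj h' b₁ b₂ hgb hneb
    refine ⟨⟨σ g, by rw [hga]; exact (G.mem_edgeSet).mpr hadja⟩,
      ⟨σ h', by rw [hgb]; exact (G.mem_edgeSet).mpr hadjb⟩, rfl, rfl, ?_, ?_⟩
    · exact hdisj
    · exact ⟨x0, hx01, hx02⟩
    -- ## Counting
  set Xset : Set (Sym2 F) := {s | ∃ e f' : F, s = s(e, f') ∧ Q.CrossingPair qm e f'}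
    with hXdef
  have hcount : Q.crossCount qm = Nat.card ↥Xset := rfl
  set S1 : Set (Sym2 F) := {s | ∃ e f' : F, s = s(e, f') ∧ Q.CrossingPair qm e f' ∧
    (∀ v : V, ¬ (v ∈ σ e ∧ v ∈ σ f'))} with hS1def
  set S2 : Set (Sym2 F) := {s | ∃ e f' : F, s = s(e, f') ∧ Q.CrossingPair qm e f' ∧
    (∃ v : V, v ∈ σ e ∧ v ∈ σ f')} with hS2def
  have hsplit : Xset ⊆ S1 ∪ S2 := by
    rintro s ⟨e, f', rfl, hcr⟩
    by_cases hd : ∀ v : V, ¬ (v ∈ σ e ∧ v ∈ σ f')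
    · exact Or.inl ⟨e, f', rfl, hcr, hd⟩
    · push_neg at hd
      obtain ⟨v, hv1, hv2⟩ := hd
      exact Or.inr ⟨e, f', rfl, hcr, v, hv1, hv2⟩
  have hXle : Nat.card ↥Xset ≤ Nat.card ↥S1 + Nat.card ↥S2 :=
    le_trans (RcrAux.card_subset_le hsplit) (RcrAux.card_union_le' _ _)
  -- edges incident to a vertex of the original graph
  have hIe_le : ∀ v : V, Nat.card ↥{e : F | ι v ∈ Q.ends e} ≤ Δ := by
    intro v
    have h1 : Nat.card ↥{e : F | ι v ∈ Q.ends e} = Q.deg (ι v) := rfl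
    rw [h1]
    exact RcrAux.deg_le_maxDeg Q (ι v)
  -- bundles: edges with a given nondegenerate shadow
  have hbundle : ∀ a b : V, {e : F | σ e = s(a, b)} ⊆
      {e : F | ι a ∈ Q.ends e} ∪ {e : F | ι b ∈ Q.ends e} := by
    intro a b e he
    have he' : σ e = s(a, b) := he
    rcases hσ e with ⟨a', b', hadj, hend, hσe⟩ | ⟨u, c, hne, hu, hc, hend, hσe⟩
    · rw [hσe] at he'
      rcases Sym2.eq_iff.mp he' with ⟨h1, h2⟩ | ⟨h1, h2⟩
      · left; rw [Set.mem_setOf_eq, hend, ← h1]; exact Sym2.mem_mk_left _ _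
      · left; rw [Set.mem_setOf_eq, hend, ← h2]; exact Sym2.mem_mk_right _ _
    · rw [hσe] at he'
      rcases Sym2.eq_iff.mp he' with ⟨h1, h2⟩ | ⟨h1, h2⟩
      · right; rw [Set.mem_setOf_eq, hend, ← h2]; exact Sym2.mem_mk_right _ _
      · left; rw [Set.mem_setOf_eq, hend, ← h2]; exact Sym2.mem_mk_right _ _
  have hbundle_card : ∀ a b : V, Nat.card ↥{e : F | σ e = s(a, b)} ≤ 2 * Δ := by
    intro a b
    refine le_trans (RcrAux.card_subset_le (hbundle a b))
      (le_trans (RcrAux.card_union_le' _ _) ?_)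
    have h1 := hIe_le a
    have h2 := hIe_le b
    omega
  -- ### the first class
  set Ycross : Set (Sym2 ↥G.edgeSet) := {t | ∃ e' f' : ↥G.edgeSet, t = s(e', f') ∧
    G.toMulti.CrossingPair p e' f'} with hYdef
  have hYcard : Nat.card ↥Ycross = G.rcr := hpc
  have hS1key : ∀ x : ↥S1, ∃ t : ↥Ycross, ∃ g h' : F, (x : Sym2 F) = s(g, h') ∧
      ∃ e' f' : ↥G.edgeSet, (t : Sym2 ↥G.edgeSet) = s(e', f') ∧ (e' : Sym2 V) = σ g ∧
        (f' : Sym2 V) = σ h' := by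
    rintro ⟨s, g, h', rfl, hcr, hdisj⟩
    obtain ⟨e', f', he', hf', hcrG⟩ := hNoCross g h' hcr hdisj
    exact ⟨⟨s(e', f'), e', f', rfl, hcrG⟩, g, h', rfl, e', f', rfl, he', hf'⟩
  choose Φ hΦ using hS1key
  have hfiber : ∀ t : ↥Ycross, Nat.card {x : ↥S1 // Φ x = t} ≤ 4 * Δ ^ 2 := by
    intro t
    obtain ⟨e₀, f₀, ht0⟩ := RcrAux.sym2_exists_rep (t : Sym2 ↥G.edgeSet)
    have hJex : ∀ x : {x : ↥S1 // Φ x = t}, ∃ gh : F × F,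
        (((x : ↥S1) : Sym2 F) = s(gh.1, gh.2)) ∧ σ gh.1 = (e₀ : Sym2 V) ∧
          σ gh.2 = (f₀ : Sym2 V) := by
      rintro ⟨x, hx⟩
      obtain ⟨g, h', hrep, e', f', hts, he', hf'⟩ := hΦ x
      rw [hx, ht0] at hts
      rcases Sym2.eq_iff.mp hts with ⟨h1, h2⟩ | ⟨h1, h2⟩
      · exact ⟨(g, h'), hrep, by rw [← he', h1], by rw [← hf', h2]⟩
      · exact ⟨(h', g), by rw [hrep]; exact Sym2.eq_swap,
          by rw [← hf', h1], by rw [← he', h2]⟩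
    choose Jf hJ1 hJ2 hJ3 using hJex
    have hJinj : Function.Injective (fun x : {x : ↥S1 // Φ x = t} =>
        ((⟨(Jf x).1, hJ2 x⟩ : {g : F // σ g = (e₀ : Sym2 V)}),
         (⟨(Jf x).2, hJ3 x⟩ : {g : F // σ g = (f₀ : Sym2 V)}))) := by
      intro x x' hxx
      simp only [Prod.mk.injEq, Subtype.mk.injEq] at hxx
      apply Subtype.ext
      apply Subtype.ext
      rw [hJ1 x, hJ1 x', hxx.1, hxx.2]
    refine le_trans (Nat.card_le_card_of_injective _ hJinj) ?_
    rw [Nat.card_prod]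
    obtain ⟨a₁, a₂, hea⟩ := RcrAux.sym2_exists_rep (e₀ : Sym2 V)
    obtain ⟨b₁, b₂, heb⟩ := RcrAux.sym2_exists_rep (f₀ : Sym2 V)
    have hc1 : Nat.card {g : F // σ g = (e₀ : Sym2 V)} ≤ 2 * Δ := by
      rw [hea]; exact hbundle_card a₁ a₂
    have hc2 : Nat.card {g : F // σ g = (f₀ : Sym2 V)} ≤ 2 * Δ := by
      rw [heb]; exact hbundle_card b₁ b₂
    calc Nat.card {g : F // σ g = (e₀ : Sym2 V)} * Nat.card {g : F // σ g = (f₀ : Sym2 V)}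
        ≤ (2 * Δ) * (2 * Δ) := Nat.mul_le_mul hc1 hc2
      _ = 4 * Δ ^ 2 := by ring
  have hS1le : Nat.card ↥S1 ≤ 4 * Δ ^ 2 * Nat.card ↥Ycross := RcrAux.card_le_mul Φ hfiber
  -- ### the second class
  set Zset : Set (F × F) := {gh | Q.CrossingPair qm gh.1 gh.2 ∧
    ∃ v : V, v ∈ σ gh.1 ∧ v ∈ σ gh.2} with hZdef
  have hS2Z : Nat.card ↥S2 ≤ Nat.card ↥Zset := by
    have hkey : ∀ x : ↥S2, ∃ gh : F × F, (x : Sym2 F) = s(gh.1, gh.2) ∧ gh ∈ Zset := by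
      rintro ⟨s, g, h', rfl, hcr, hv⟩
      exact ⟨(g, h'), rfl, hcr, hv⟩
    choose ψ hψ1 hψ2 using hkey
    have hinj : Function.Injective (fun x : ↥S2 => (⟨ψ x, hψ2 x⟩ : ↥Zset)) := by
      intro x x' hxx
      simp only [Subtype.mk.injEq] at hxx
      apply Subtype.ext
      rw [hψ1 x, hψ1 x', hxx]
    exact Nat.card_le_card_of_injective _ hinj
  -- shadow-incidence sets
  have hEa_le : ∀ v : V, Nat.card ↥{e : F | v ∈ σ e} ≤ Δ + Δ * Δ := by
    intro v
    set NewSet : Set F := {e : F | ∃ (u : W) (hne : (C u).Nonempty),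
      u ∉ Set.range ι ∧ u ∈ Q.ends e ∧ hne.some = v} with hNdef
    have hsub : {e : F | v ∈ σ e} ⊆ {e : F | ι v ∈ Q.ends e} ∪ NewSet := by
      intro e he
      have he' : v ∈ σ e := he
      rcases hσ e with ⟨a', b', hadj, hend, hσe⟩ | ⟨u, c, hne, hu, hc, hend, hσe⟩
      · rw [hσe] at he'
        rcases Sym2.mem_iff.mp he' with h1 | h1
        · left; rw [Set.mem_setOf_eq, hend, h1]; exact Sym2.mem_mk_left _ _
        · left; rw [Set.mem_setOf_eq, hend, h1]; exact Sym2.mem_mk_right _ _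
      · rw [hσe] at he'
        rcases Sym2.mem_iff.mp he' with h1 | h1
        · right
          exact ⟨u, hne, hu, by rw [hend]; exact Sym2.mem_mk_left _ _, h1.symm⟩
        · left; rw [Set.mem_setOf_eq, hend, h1]; exact Sym2.mem_mk_right _ _
    refine le_trans (RcrAux.card_subset_le hsub)
      (le_trans (RcrAux.card_union_le' _ _) ?_)
    have h1 := hIe_le v
    have h2 : Nat.card ↥NewSet ≤ Δ * Δ := by
      set Uv : Set W := {u | u ∉ Set.range ι ∧ ∃ hne : (C u).Nonempty, hne.some = v}
        with hUdef
      have hUle : Nat.card ↥Uv ≤ Δ := by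
        have hUkey : ∀ x : ↥Uv, ∃ e : F, Q.ends e = s((x : W), ι v) := by
          rintro ⟨u, hu, hne, hsome⟩
          have hvC : v ∈ C u := by rw [← hsome]; exact hne.some_mem
          exact hedge3 u hu v hvC
        choose eU heU using hUkey
        have hinjU : Function.Injective (fun x : ↥Uv =>
            (⟨eU x, by rw [Set.mem_setOf_eq, heU x]; exact Sym2.mem_mk_right _ _⟩ :
              ↥{e : F | ι v ∈ Q.ends e})) := by
          intro x x' hxx
          simp only [Subtype.mk.injEq] at hxx
          have h5 : Q.ends (eU x) = Q.ends (eU x') := by rw [hxx]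
          rw [heU x, heU x'] at h5
          apply Subtype.ext
          rcases Sym2.eq_iff.mp h5 with ⟨h6, -⟩ | ⟨h6, h7⟩
          · exact h6
          · exact absurd ⟨v, h6.symm⟩ x.2.1
        exact le_trans (Nat.card_le_card_of_injective _ hinjU) (hIe_le v)
      have hkey2 : ∀ x : ↥NewSet, ∃ u : ↥Uv, (u : W) ∈ Q.ends (x : F) := by
        rintro ⟨e, u, hne, hu, hue, hsome⟩
        exact ⟨⟨u, hu, hne, hsome⟩, hue⟩
      choose uf huf using hkey2
      have hfib2 : ∀ u₀ : ↥Uv, Nat.card {x : ↥NewSet // uf x = u₀} ≤ Δ := by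
        intro u₀
        have hj : ∀ y : {x : ↥NewSet // uf x = u₀},
            ((y : ↥NewSet) : F) ∈ {e : F | (u₀ : W) ∈ Q.ends e} := by
          rintro ⟨x, hx⟩
          have h6 := huf x
          rw [hx] at h6
          exact h6
        have hinj2 : Function.Injective (fun y : {x : ↥NewSet // uf x = u₀} =>
            (⟨((y : ↥NewSet) : F), hj y⟩ : ↥{e : F | (u₀ : W) ∈ Q.ends e})) := by
          intro y y' hyy
          simp only [Subtype.mk.injEq] at hyy
          exact Subtype.ext (Subtype.ext hyy)
        refine le_trans (Nat.card_le_card_of_injective _ hinj2) ?_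
        have h7 : Nat.card ↥{e : F | (u₀ : W) ∈ Q.ends e} = Q.deg (u₀ : W) := rfl
        rw [h7]
        exact RcrAux.deg_le_maxDeg Q _
      refine le_trans (RcrAux.card_le_mul uf hfib2) ?_
      exact Nat.mul_le_mul_left Δ hUle
    exact add_le_add h1 h2
  -- fibers of the second class over the first edge
  have hZfiber : ∀ g : F, Nat.card {z : ↥Zset // (z : F × F).1 = g} ≤ 2 * Δ ^ 3 := by
    intro g
    obtain ⟨a₁, a₂, hga⟩ := RcrAux.sym2_exists_rep (σ g)
    set Bad : Set F := ({e : F | a₁ ∈ σ e} \ {g}) ∪ ({e : F | a₂ ∈ σ e} \ {g}) with hBdef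
    have hkey3 : ∀ z : {z : ↥Zset // (z : F × F).1 = g}, ((z : ↥Zset) : F × F).2 ∈ Bad := by
      rintro ⟨⟨⟨g', h'⟩, hcr, v, hv1, hv2⟩, hg⟩
      have hg' : g' = g := hg
      subst hg'
      obtain ⟨w1, w2, hwrep⟩ := RcrAux.sym2_exists_rep (Q.ends g')
      have hw : w1 ∈ Q.ends g' := by rw [hwrep]; exact Sym2.mem_mk_left _ _
      have hne' : h' ≠ g' := by
        rintro rfl
        exact hcr.1 w1 ⟨hw, hw⟩
      rw [hga] at hv1
      rcases Sym2.mem_iff.mp hv1 with h1 | h1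
      · left
        refine ⟨?_, by simpa using hne'⟩
        rw [Set.mem_setOf_eq, ← h1]
        exact hv2
      · right
        refine ⟨?_, by simpa using hne'⟩
        rw [Set.mem_setOf_eq, ← h1]
        exact hv2
    have hinj3 : Function.Injective (fun z : {z : ↥Zset // (z : F × F).1 = g} =>
        (⟨((z : ↥Zset) : F × F).2, hkey3 z⟩ : ↥Bad)) := by
      intro z z' hzz
      simp only [Subtype.mk.injEq] at hzz
      apply Subtype.ext
      apply Subtype.ext
      apply Prod.ext
      · rw [z.2, z'.2]
      · exact hzz
    refine le_trans (Nat.card_le_card_of_injective _ hinj3) ?_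
    have hg1 : g ∈ {e : F | a₁ ∈ σ e} := by
      rw [Set.mem_setOf_eq, hga]; exact Sym2.mem_mk_left _ _
    have hg2 : g ∈ {e : F | a₂ ∈ σ e} := by
      rw [Set.mem_setOf_eq, hga]; exact Sym2.mem_mk_right _ _
    have hd1 : Nat.card ↥({e : F | a₁ ∈ σ e} \ {g}) = Nat.card ↥{e : F | a₁ ∈ σ e} - 1 := by
      rw [Nat.card_coe_set_eq, Nat.card_coe_set_eq,
        Set.ncard_diff_singleton_of_mem hg1]
    have hd2 : Nat.card ↥({e : F | a₂ ∈ σ e} \ {g}) = Nat.card ↥{e : F | a₂ ∈ σ e} - 1 := by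
      rw [Nat.card_coe_set_eq, Nat.card_coe_set_eq,
        Set.ncard_diff_singleton_of_mem hg2]
    have he1 := hEa_le a₁
    have he2 := hEa_le a₂
    have harith : Δ + Δ * Δ ≤ Δ ^ 3 + 1 := RcrAux.arith1 Δ
    refine le_trans (RcrAux.card_union_le' _ _) ?_
    rw [hd1, hd2]
    have hb1 : Nat.card ↥{e : F | a₁ ∈ σ e} - 1 ≤ Δ ^ 3 :=
      Nat.sub_le_iff_le_add.mpr (le_trans he1 harith)
    have hb2 : Nat.card ↥{e : F | a₂ ∈ σ e} - 1 ≤ Δ ^ 3 :=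
      Nat.sub_le_iff_le_add.mpr (le_trans he2 harith)
    linarith
  have hS2le : Nat.card ↥S2 ≤ 2 * Δ ^ 3 * Nat.card F := by
    refine le_trans hS2Z ?_
    exact RcrAux.card_le_mul (fun z : ↥Zset => (z : F × F).1) hZfiber
  -- ### final assembly
  have h4 : 4 * Δ ^ 2 ≤ (Δ + 1) ^ 4 := RcrAux.arith2 Δ
  have hm : Nat.card F = Q.edgeCount := rfl
  calc Q.crossCount qm = Nat.card ↥Xset := hcount
    _ ≤ Nat.card ↥S1 + Nat.card ↥S2 := hXle
    _ ≤ 4 * Δ ^ 2 * Nat.card ↥Ycross + 2 * Δ ^ 3 * Nat.card F := add_le_add hS1le hS2le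
    _ = 4 * Δ ^ 2 * G.rcr + 2 * Δ ^ 3 * Q.edgeCount := by rw [hYcard, hm]
    _ ≤ (Δ + 1) ^ 4 * G.rcr + 2 * Δ ^ 3 * Q.edgeCount :=
        add_le_add_left (Nat.mul_le_mul_right _ h4) _
end

section
/- Let D be a rectilinear drawing of a finite simple graph G and let w be a vertex of G. Then there exists ε > 0 such that for every point p at distance less than ε from the point representing w in D, if moving w to p keeps the vertex points in general position, the resulting rectilinear drawing D' of G has exactly the same set of crossing pairs of edges as D (a pair of edges crosses in D' if and only if it crosses in D). -/
/-!
There are finitely many pairs of edges, so it suffices that whether a given pair crosses is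
locally constant in the position of `w`. Edges sharing an endpoint never form a crossing pair.
Disjoint segments have disjoint thickenings, so they stay disjoint when their endpoints move a
little. Two segments that meet, with their four endpoints in general position, meet
transversally: the endpoints of each lie strictly on opposite sides of the line of the other.
This is a strict sign condition on orientation determinants, hence open, and it forces the
segments to meet.
-/

open Filter Topology

/-- Twice the signed area of the triangle `a b c`. -/
def orient (a b c : ℝ × ℝ) : ℝ :=
  (b.1 - a.1) * (c.2 - a.2) - (b.2 - a.2) * (c.1 - a.1)

theorem collinear_of_orient_eq_zero {a b c : ℝ × ℝ} (h : orient a b c = 0) :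
    Collinear ℝ ({a, b, c} : Set (ℝ × ℝ)) := by
  rcases eq_or_ne a b with rfl | hab
  · simpa using collinear_pair ℝ a c
  have hc : ∃ r : ℝ, AffineMap.lineMap a b r = c := by
    unfold orient at h
    by_cases h₁ : a.1 = b.1
    · have h₂ : b.2 - a.2 ≠ 0 := fun h₂ => hab (Prod.ext h₁ (by linarith))
      have hc₁ : c.1 = a.1 := by
        have : (b.2 - a.2) * (c.1 - a.1) = 0 := by linear_combination -h - (c.2 - a.2) * h₁
        linarith [(mul_eq_zero.1 this).resolve_left h₂]
      refine ⟨(c.2 - a.2) / (b.2 - a.2), Prod.ext ?_ ?_⟩ <;>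
        simp only [AffineMap.lineMap_apply_module', Prod.fst_add, Prod.snd_add, Prod.smul_fst,
          Prod.smul_snd, Prod.fst_sub, Prod.snd_sub, smul_eq_mul]
      · rw [← h₁, hc₁]; ring
      · field_simp; ring
    · have h₂ : b.1 - a.1 ≠ 0 := sub_ne_zero.mpr (Ne.symm h₁)
      refine ⟨(c.1 - a.1) / (b.1 - a.1), Prod.ext ?_ ?_⟩ <;>
        simp only [AffineMap.lineMap_apply_module', Prod.fst_add, Prod.snd_add, Prod.smul_fst,
          Prod.smul_snd, Prod.fst_sub, Prod.snd_sub, smul_eq_mul]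
      · field_simp; ring
      · field_simp; linarith
  obtain ⟨r, rfl⟩ := hc
  rw [Set.pair_comm, Set.insert_comm]
  exact collinear_insert_of_mem_affineSpan_pair (AffineMap.lineMap_mem_affineSpan_pair r a b)

theorem orient_add_smul {u v : ℝ} (huv : u + v = 1) (c d a b : ℝ × ℝ) :
    orient c d (u • a + v • b) = u * orient c d a + v * orient c d b := by
  obtain rfl : v = 1 - u := by linarith
  simp only [orient, Prod.fst_add, Prod.snd_add, Prod.smul_fst, Prod.smul_snd, smul_eq_mul]
  ring

theorem orient_eq_zero_of_mem_segment {c d q : ℝ × ℝ} (hq : q ∈ segment ℝ c d) :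
    orient c d q = 0 := by
  obtain ⟨u, v, -, -, huv, rfl⟩ := hq
  rw [orient_add_smul huv]
  simp only [orient]
  ring

theorem orient_mul_orient_neg_of_mem_segment {a b c d q : ℝ × ℝ}
    (hab : q ∈ segment ℝ a b) (hcd : q ∈ segment ℝ c d)
    (ha : orient c d a ≠ 0) (hb : orient c d b ≠ 0) :
    orient c d a * orient c d b < 0 := by
  obtain ⟨u, v, hu, hv, huv, rfl⟩ := hab
  have h₀ := orient_eq_zero_of_mem_segment hcd
  rw [orient_add_smul huv] at h₀
  have key : orient c d a * orient c d b =
      -(u * orient c d a ^ 2 + v * orient c d b ^ 2) := by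
    linear_combination (orient c d a + orient c d b) * h₀ - orient c d a * orient c d b * huv
  rw [key, neg_neg_iff_pos]
  rcases hu.lt_or_eq with hu | rfl
  · positivity
  · have hv : v = 1 := by linarith
    subst hv
    positivity

theorem mem_segment_of_mul_neg {r s : ℝ} (h : r * s < 0) (a b : ℝ × ℝ) :
    (s - r)⁻¹ • (s • a - r • b) ∈ segment ℝ a b := by
  have hrs : s - r ≠ 0 := sub_ne_zero.2 fun hsr => by subst hsr; nlinarith [mul_self_nonneg s]
  refine ⟨s / (s - r), -r / (s - r), ?_, ?_, by field_simp; ring, by module⟩ <;>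
    rcases mul_neg_iff.mp h with ⟨hr, hs⟩ | ⟨hr, hs⟩ <;>
    first
    | exact div_nonneg (by linarith) (by linarith)
    | exact div_nonneg_of_nonpos (by linarith) (by linarith)

/-- The common point is the intersection of the two lines, written once as a point of
`[a, b]` and once as a point of `[c, d]`. -/
theorem segment_inter_nonempty_of_orient_mul_neg {a b c d : ℝ × ℝ}
    (h₁ : orient c d a * orient c d b < 0) (h₂ : orient a b c * orient a b d < 0) :
    (segment ℝ a b ∩ segment ℝ c d).Nonempty := by
  refine ⟨_, mem_segment_of_mul_neg h₁ a b, ?_⟩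
  convert mem_segment_of_mul_neg h₂ c d using 1
  have hden : orient c d b - orient c d a = -(orient a b d - orient a b c) := by
    simp only [orient]; ring
  have hnum : orient c d b • a - orient c d a • b = -(orient a b d • c - orient a b c • d) := by
    ext <;> simp only [orient, Prod.fst_sub, Prod.snd_sub, Prod.smul_fst, Prod.smul_snd,
      Prod.fst_neg, Prod.snd_neg, smul_eq_mul] <;> ring
  rw [hden, hnum, inv_neg, neg_smul_neg]

theorem Filter.Tendsto.orient {α : Type*} {l : Filter α} {a b c : α → ℝ × ℝ}
    {a₀ b₀ c₀ : ℝ × ℝ} (ha : Tendsto a l (𝓝 a₀)) (hb : Tendsto b l (𝓝 b₀))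
    (hc : Tendsto c l (𝓝 c₀)) :
    Tendsto (fun x => _root_.orient (a x) (b x) (c x)) l (𝓝 (_root_.orient a₀ b₀ c₀)) := by
  have : Continuous fun x : (ℝ × ℝ) × (ℝ × ℝ) × (ℝ × ℝ) => _root_.orient x.1 x.2.1 x.2.2 := by
    unfold _root_.orient; fun_prop
  exact (this.tendsto _).comp (ha.prodMk_nhds (hb.prodMk_nhds hc))

section Segments

variable {E : Type*} [NormedAddCommGroup E] [NormedSpace ℝ E]

theorem isCompact_segment (x y : E) : IsCompact (segment ℝ x y) := by
  rw [segment_eq_image_lineMap]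
  exact isCompact_Icc.image AffineMap.lineMap_continuous

theorem segment_subset_thickening {δ : ℝ} {x y x' y' : E} (hx : dist x' x < δ)
    (hy : dist y' y < δ) : segment ℝ x' y' ⊆ Metric.thickening δ (segment ℝ x y) :=
  ((convex_segment x y).thickening δ).segment_subset
    (Metric.mem_thickening_iff.2 ⟨x, left_mem_segment ℝ x y, hx⟩)
    (Metric.mem_thickening_iff.2 ⟨y, right_mem_segment ℝ x y, hy⟩)

variable {α : Type*} {l : Filter α}

theorem eventually_disjoint_segment {a b c d : α → E} {a₀ b₀ c₀ d₀ : E}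
    (ha : Tendsto a l (𝓝 a₀)) (hb : Tendsto b l (𝓝 b₀)) (hc : Tendsto c l (𝓝 c₀))
    (hd : Tendsto d l (𝓝 d₀)) (h : Disjoint (segment ℝ a₀ b₀) (segment ℝ c₀ d₀)) :
    ∀ᶠ x in l, Disjoint (segment ℝ (a x) (b x)) (segment ℝ (c x) (d x)) := by
  obtain ⟨δ, hδ, hthick⟩ :=
    h.exists_thickenings (isCompact_segment a₀ b₀) (isCompact_segment c₀ d₀).isClosed
  filter_upwards [Metric.tendsto_nhds.1 ha δ hδ, Metric.tendsto_nhds.1 hb δ hδ,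
    Metric.tendsto_nhds.1 hc δ hδ, Metric.tendsto_nhds.1 hd δ hδ] with x hax hbx hcx hdx
  exact hthick.mono (segment_subset_thickening hax hbx) (segment_subset_thickening hcx hdx)

end Segments

section Crossings

variable {α : Type*} {l : Filter α} {a b c d : α → ℝ × ℝ} {a₀ b₀ c₀ d₀ : ℝ × ℝ}

theorem eventually_segment_inter_nonempty (ha : Tendsto a l (𝓝 a₀))
    (hb : Tendsto b l (𝓝 b₀)) (hc : Tendsto c l (𝓝 c₀)) (hd : Tendsto d l (𝓝 d₀))
    (h₁ : orient c₀ d₀ a₀ * orient c₀ d₀ b₀ < 0) (h₂ : orient a₀ b₀ c₀ * orient a₀ b₀ d₀ < 0) :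
    ∀ᶠ x in l, (segment ℝ (a x) (b x) ∩ segment ℝ (c x) (d x)).Nonempty := by
  filter_upwards [((hc.orient hd ha).mul (hc.orient hd hb)).eventually (gt_mem_nhds h₁),
    ((ha.orient hb hc).mul (ha.orient hb hd)).eventually (gt_mem_nhds h₂)] with x h₁ h₂
  exact segment_inter_nonempty_of_orient_mul_neg h₁ h₂

theorem eventually_segment_inter_nonempty_iff (ha : Tendsto a l (𝓝 a₀))
    (hb : Tendsto b l (𝓝 b₀)) (hc : Tendsto c l (𝓝 c₀)) (hd : Tendsto d l (𝓝 d₀))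
    (hcda : ¬ Collinear ℝ {c₀, d₀, a₀}) (hcdb : ¬ Collinear ℝ {c₀, d₀, b₀})
    (habc : ¬ Collinear ℝ {a₀, b₀, c₀}) (habd : ¬ Collinear ℝ {a₀, b₀, d₀}) :
    ∀ᶠ x in l, ((segment ℝ (a x) (b x) ∩ segment ℝ (c x) (d x)).Nonempty ↔
      (segment ℝ a₀ b₀ ∩ segment ℝ c₀ d₀).Nonempty) := by
  by_cases hmeet : (segment ℝ a₀ b₀ ∩ segment ℝ c₀ d₀).Nonempty
  · obtain ⟨q, hab, hcd⟩ := hmeet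
    filter_upwards [eventually_segment_inter_nonempty ha hb hc hd
      (orient_mul_orient_neg_of_mem_segment hab hcd (mt collinear_of_orient_eq_zero hcda)
        (mt collinear_of_orient_eq_zero hcdb))
      (orient_mul_orient_neg_of_mem_segment hcd hab (mt collinear_of_orient_eq_zero habc)
        (mt collinear_of_orient_eq_zero habd))] with x hx
    exact iff_of_true hx ⟨q, hab, hcd⟩
  · have hdisj := Set.disjoint_iff_inter_eq_empty.2 (Set.not_nonempty_iff_eq_empty.1 hmeet)
    filter_upwards [eventually_disjoint_segment ha hb hc hd hdisj] with x hx
    exact iff_of_false (Set.not_nonempty_iff_eq_empty.2 hx.inter_eq) hmeet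

end Crossings

namespace Multigraph

variable {V E : Type} {K : Multigraph V E} {p : V → ℝ × ℝ}

theorem IsRectDrawing.not_collinear (hp : K.IsRectDrawing p) {x y z : V} (hxy : x ≠ y)
    (hxz : x ≠ z) (hyz : y ≠ z) : ¬ Collinear ℝ {p x, p y, p z} :=
  hp.2.1 _ ⟨x, rfl⟩ _ ⟨y, rfl⟩ _ ⟨z, rfl⟩ (hp.1.ne hxy) (hp.1.ne hxz) (hp.1.ne hyz)

theorem IsRectDrawing.eventually_crossingPair_iff (hp : K.IsRectDrawing p) {α : Type*}
    {l : Filter α} {P : α → V → ℝ × ℝ} (hP : Tendsto P l (𝓝 p)) (e f : E) :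
    ∀ᶠ t in l, K.CrossingPair (P t) e f ↔ K.CrossingPair p e f := by
  by_cases hshared : ∃ v, v ∈ K.ends e ∧ v ∈ K.ends f
  · obtain ⟨v, hv⟩ := hshared
    exact Eventually.of_forall fun t => iff_of_false (fun h => h.1 v hv) (fun h => h.1 v hv)
  obtain ⟨a, b, he⟩ := Sym2.exists.1 ⟨K.ends e, rfl⟩
  obtain ⟨c, d, hf⟩ := Sym2.exists.1 ⟨K.ends f, rfl⟩
  have hab : a ≠ b := fun h => K.not_isDiag e (he ▸ Sym2.mk_isDiag_iff.2 h)
  have hcd : c ≠ d := fun h => K.not_isDiag f (hf ▸ Sym2.mk_isDiag_iff.2 h)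
  simp only [not_exists, not_and, he, hf] at hshared
  have hac : a ≠ c := fun h => hshared a (Sym2.mem_mk_left a b) (h ▸ Sym2.mem_mk_left c d)
  have had : a ≠ d := fun h => hshared a (Sym2.mem_mk_left a b) (h ▸ Sym2.mem_mk_right c d)
  have hbc : b ≠ c := fun h => hshared b (Sym2.mem_mk_right a b) (h ▸ Sym2.mem_mk_left c d)
  have hbd : b ≠ d := fun h => hshared b (Sym2.mem_mk_right a b) (h ▸ Sym2.mem_mk_right c d)
  have hPv := tendsto_pi_nhds.1 hP
  filter_upwards [eventually_segment_inter_nonempty_iff (hPv a) (hPv b) (hPv c) (hPv d)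
    (hp.not_collinear hcd hac.symm had.symm) (hp.not_collinear hcd hbc.symm hbd.symm)
    (hp.not_collinear hab hac hbc) (hp.not_collinear hab had hbd)] with t ht
  simp only [CrossingPair, he, hf, Sym2.map_mk, segOf, Sym2.lift_mk]
  exact and_congr_right' ht

end Multigraph

/-- For any rectilinear drawing `p` of a finite simple graph `G` and any
vertex `w`, there is `ε > 0` such that moving `w` to any point at distance less than `ε`
that keeps the vertex points in general position yields a rectilinear drawing with exactly
the same crossing pairs of edges. -/
theorem crossingPairs_stable_under_small_vertex_move {V : Type} [Fintype V] [DecidableEq V]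
    (G : SimpleGraph V) (p : V → ℝ × ℝ) (hD : G.toMulti.IsRectDrawing p) (w : V) :
    ∃ ε : ℝ, 0 < ε ∧ ∀ q : ℝ × ℝ, dist q (p w) < ε →
      G.toMulti.IsRectDrawing (Function.update p w q) →
      ∀ e f : G.edgeSet,
        (G.toMulti.CrossingPair (Function.update p w q) e f ↔
          G.toMulti.CrossingPair p e f) := by
  have hmove : Tendsto (fun q => Function.update p w q) (𝓝 (p w)) (𝓝 p) := by
    simpa using (tendsto_const_nhds (x := p)).update w (tendsto_id (x := 𝓝 (p w)))
  have hstable : ∀ᶠ q in 𝓝 (p w), ∀ e f : G.edgeSet,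
      (G.toMulti.CrossingPair (Function.update p w q) e f ↔ G.toMulti.CrossingPair p e f) :=
    eventually_all.2 fun e => eventually_all.2 (hD.eventually_crossingPair_iff hmove e)
  obtain ⟨ε, hε, hball⟩ := Metric.eventually_nhds_iff.1 hstable
  exact ⟨ε, hε, fun q hq _ => hball hq⟩
end

section
/- Let D be a rectilinear drawing of a finite simple graph G and let w be a vertex of G with neighbours v₁, …, v_d. Then there exists a radius r > 0 such that, writing C for the closed disk of radius r centered at the point representing w, the following holds. Let P be any set of at most d points in C such that the vertex points of D together with P are in general position, and for each i ∈ {1,…,d} choose a point p_i ∈ P (not necessarily distinct for distinct i). Let D' be obtained from D by replacing each segment from w to v_i by the segment from v_i to p_i. Then: (1) two edges of G neither of which is incident to w cross in D' if and only if they cross in D; (2) for each i and each edge xy of G with x, y ∉ {w, v_i}, the segment v_i p_i crosses xy in D' if and only if the edge w v_i crosses xy in D; and (3) every remaining crossing of D' is a crossing between two segments v_i p_i and v_j p_j with p_i ≠ p_j. -/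
/-- The edges of `G` that do not contain the vertex `w`. -/
def OldEdge {V : Type} (G : SimpleGraph V) (w : V) : Type :=
  {e : Sym2 V // e ∈ G.edgeSet ∧ w ∉ e}

/-- The neighbours of `w` in `G`. -/
def Nbr {V : Type} (G : SimpleGraph V) (w : V) : Type := {v : V // G.Adj w v}

/-- Edges of the drawing obtained after replacing the edges at `w`: the old edges not
incident to `w`, and for each neighbour `vᵢ` of `w` the replaced edge from `vᵢ` to the
chosen point `pᵢ = φ vᵢ`. -/
def NewEdge {V : Type} (G : SimpleGraph V) (w : V) : Type := OldEdge G w ⊕ Nbr G w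

/-- The segment representing an edge of the modified drawing `D'`. -/
def newSeg {V : Type} (G : SimpleGraph V) (w : V) (p : V → ℝ × ℝ)
    (φ : Nbr G w → ℝ × ℝ) : NewEdge G w → Set (ℝ × ℝ)
  | Sum.inl e => segOf (e.1.map p)
  | Sum.inr i => segment ℝ (p i.1) (φ i)

/-- The endpoints of an edge of the modified drawing `D'`. -/
def newEnds {V : Type} (G : SimpleGraph V) (w : V) (p : V → ℝ × ℝ)
    (φ : Nbr G w → ℝ × ℝ) : NewEdge G w → Set (ℝ × ℝ)
  | Sum.inl e => {x | ∃ v ∈ e.1, p v = x}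
  | Sum.inr i => {p i.1, φ i}

/-- Two edges of the modified drawing `D'` cross: they have no common endpoint and their
segments have a common point. -/
def NewCross {V : Type} (G : SimpleGraph V) (w : V) (p : V → ℝ × ℝ)
    (φ : Nbr G w → ℝ × ℝ) (e₁ e₂ : NewEdge G w) : Prop :=
  (newEnds G w p φ e₁ ∩ newEnds G w p φ e₂ = ∅) ∧
  (newSeg G w p φ e₁ ∩ newSeg G w p φ e₂).Nonempty
/-! ### Auxiliary geometric lemmas for the disk replacement lemma -/

/-- Signed area: cross product of `v - u` and `z - u`. -/
private def sg (u v z : ℝ × ℝ) : ℝ :=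
  (v.1 - u.1) * (z.2 - u.2) - (v.2 - u.2) * (z.1 - u.1)

private lemma sg_self_left (u v : ℝ × ℝ) : sg u v u = 0 := by simp [sg]

private lemma sg_self_right (u v : ℝ × ℝ) : sg u v v = 0 := by simp [sg]; ring

private lemma sg_swap (u v z : ℝ × ℝ) : sg u z v = - sg u v z := by simp [sg]; ring

private lemma sg_lineMap (X Y A B : ℝ × ℝ) (t : ℝ) :
    sg X Y (A + t • (B - A)) = sg X Y A + t * (sg X Y B - sg X Y A) := by
  simp [sg, Prod.fst_add, Prod.snd_add, Prod.smul_fst, Prod.smul_snd, Prod.fst_sub, Prod.snd_sub,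
    smul_eq_mul]
  ring

private lemma mem_segment_iff_param {X Y z : ℝ × ℝ} :
    z ∈ segment ℝ X Y ↔ ∃ t : ℝ, 0 ≤ t ∧ t ≤ 1 ∧ z = X + t • (Y - X) := by
  rw [segment_eq_image' ℝ X Y]
  constructor
  · rintro ⟨t, ⟨h0, h1⟩, rfl⟩; exact ⟨t, h0, h1, rfl⟩
  · rintro ⟨t, h0, h1, rfl⟩; exact ⟨t, ⟨h0, h1⟩, rfl⟩

private lemma sg_eq_zero_of_mem_segment {X Y z : ℝ × ℝ} (h : z ∈ segment ℝ X Y) :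
    sg X Y z = 0 := by
  obtain ⟨t, _, _, rfl⟩ := mem_segment_iff_param.mp h
  rw [sg_lineMap, sg_self_left, sg_self_right]; ring

private lemma sg_param {X Y q : ℝ × ℝ} (hXY : X ≠ Y) (h : sg X Y q = 0) :
    ∃ t : ℝ, q = X + t • (Y - X) := by
  by_cases h1 : Y.1 - X.1 ≠ 0
  · refine ⟨(q.1 - X.1) / (Y.1 - X.1), ?_⟩
    have h2 : q.2 - X.2 = (q.1 - X.1) / (Y.1 - X.1) * (Y.2 - X.2) := by
      field_simp
      simp only [sg] at h
      linarith
    ext <;> simp [Prod.fst_add, Prod.smul_fst, Prod.snd_add, Prod.smul_snd, smul_eq_mul]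
    · field_simp; ring
    · linarith [h2]
  · push_neg at h1
    have h2 : Y.2 - X.2 ≠ 0 := by
      intro h2
      exact hXY (Prod.ext (by linarith) (by linarith))
    refine ⟨(q.2 - X.2) / (Y.2 - X.2), ?_⟩
    have h3 : q.1 - X.1 = (q.2 - X.2) / (Y.2 - X.2) * (Y.1 - X.1) := by
      field_simp
      simp only [sg] at h
      nlinarith [h, h1]
    ext <;> simp [Prod.fst_add, Prod.smul_fst, Prod.snd_add, Prod.smul_snd, smul_eq_mul]
    · linarith [h3]
    · field_simp; ring

private lemma collinear_of_sg_eq_zero {u v z : ℝ × ℝ} (h : sg u v z = 0) :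
    Collinear ℝ ({u, v, z} : Set (ℝ × ℝ)) := by
  by_cases huv : u = v
  · subst huv
    have he : ({u, u, z} : Set (ℝ × ℝ)) = {u, z} := by simp
    rw [he]; exact collinear_pair ℝ u z
  · obtain ⟨t, rfl⟩ := sg_param huv h
    rw [collinear_iff_of_mem (Set.mem_insert u _)]
    refine ⟨v - u, ?_⟩
    rintro q (rfl | rfl | rfl)
    · exact ⟨0, by simp⟩
    · exact ⟨1, by simp⟩
    · exact ⟨t, by simp [add_comm]⟩

private lemma opp_sign {s0 s1 t : ℝ} (h0 : s0 ≠ 0) (h1 : s1 ≠ 0) (ht0 : 0 ≤ t) (ht1 : t ≤ 1)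
    (h : s0 + t * (s1 - s0) = 0) : s0 * s1 < 0 := by
  rcases h0.lt_or_gt with hs | hs <;> rcases h1.lt_or_gt with hs' | hs'
  · rcases eq_or_lt_of_le ht0 with rfl | ht0'
    · simp at h; exact absurd h h0
    · nlinarith [mul_pos ht0' (neg_pos.mpr hs'),
        mul_nonneg (sub_nonneg.mpr ht1) (neg_nonneg.mpr hs.le)]
  · exact mul_neg_of_neg_of_pos hs hs'
  · exact mul_neg_of_pos_of_neg hs hs'
  · rcases eq_or_lt_of_le ht0 with rfl | ht0'
    · simp at h; exact absurd h h0
    · nlinarith [mul_pos ht0' hs', mul_nonneg (sub_nonneg.mpr ht1) hs.le]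

private lemma zero_combo {s0 s1 : ℝ} (h : s0 * s1 < 0) :
    ∃ t : ℝ, 0 ≤ t ∧ t ≤ 1 ∧ s0 + t * (s1 - s0) = 0 := by
  have hne : s0 - s1 ≠ 0 := by
    intro h'
    have he : s0 = s1 := by linarith
    rw [he] at h; nlinarith [mul_self_nonneg s1]
  refine ⟨s0 / (s0 - s1), ?_, ?_, by field_simp; ring⟩
  · rcases lt_or_gt_of_ne (left_ne_zero_of_mul h.ne) with h0 | h0
    · have h1 : 0 < s1 := by nlinarith
      rw [show s0 / (s0 - s1) = (-s0) / (-(s0 - s1)) by rw [neg_div_neg_eq]]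
      exact div_nonneg (by linarith) (by linarith)
    · have h1 : s1 < 0 := by nlinarith
      exact div_nonneg h0.le (by linarith)
  · rcases lt_or_gt_of_ne (left_ne_zero_of_mul h.ne) with h0 | h0
    · have h1 : 0 < s1 := by nlinarith
      rw [show s0 / (s0 - s1) = (-s0) / (-(s0 - s1)) by rw [neg_div_neg_eq]]
      rw [div_le_one (by linarith)]; linarith
    · have h1 : s1 < 0 := by nlinarith
      rw [div_le_one (by linarith)]; linarith

private lemma pt_unique {a b X Y q q' : ℝ × ℝ} (hab : sg X Y a ≠ sg X Y b)
    (hq1 : sg a b q = 0) (hq2 : sg X Y q = 0)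
    (hq'1 : sg a b q' = 0) (hq'2 : sg X Y q' = 0) : q = q' := by
  have hD : (Y.1 - X.1) * (b.2 - a.2) - (Y.2 - X.2) * (b.1 - a.1) ≠ 0 := by
    intro h; apply hab; simp only [sg]; linarith
  simp only [sg] at hq1 hq2 hq'1 hq'2
  have h1 : ((Y.1 - X.1) * (b.2 - a.2) - (Y.2 - X.2) * (b.1 - a.1)) * (q'.1 - q.1) = 0 := by
    linear_combination (b.1 - a.1) * hq'2 - (b.1 - a.1) * hq2 - (Y.1 - X.1) * hq'1 +
      (Y.1 - X.1) * hq1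
  have h2 : ((Y.1 - X.1) * (b.2 - a.2) - (Y.2 - X.2) * (b.1 - a.1)) * (q'.2 - q.2) = 0 := by
    linear_combination (b.2 - a.2) * hq'2 - (b.2 - a.2) * hq2 - (Y.2 - X.2) * hq'1 +
      (Y.2 - X.2) * hq1
  have e1 := (mul_eq_zero.mp h1).resolve_left hD
  have e2 := (mul_eq_zero.mp h2).resolve_left hD
  ext <;> linarith

private lemma cross_iff {a b X Y : ℝ × ℝ} (h1 : sg X Y a ≠ 0) (h2 : sg X Y b ≠ 0)
    (h3 : sg a b X ≠ 0) (h4 : sg a b Y ≠ 0) :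
    (segment ℝ a b ∩ segment ℝ X Y).Nonempty ↔
      sg X Y a * sg X Y b < 0 ∧ sg a b X * sg a b Y < 0 := by
  constructor
  · rintro ⟨q, hqab, hqXY⟩
    constructor
    · obtain ⟨t, ht0, ht1, rfl⟩ := mem_segment_iff_param.mp hqab
      have hz : sg X Y (a + t • (b - a)) = 0 := sg_eq_zero_of_mem_segment hqXY
      rw [sg_lineMap] at hz
      exact opp_sign h1 h2 ht0 ht1 hz
    · obtain ⟨s, hs0, hs1, rfl⟩ := mem_segment_iff_param.mp hqXY
      have hz : sg a b (X + s • (Y - X)) = 0 := sg_eq_zero_of_mem_segment hqab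
      rw [sg_lineMap] at hz
      exact opp_sign h3 h4 hs0 hs1 hz
  · rintro ⟨hA, hB⟩
    obtain ⟨t, ht0, ht1, hteq⟩ := zero_combo hA
    obtain ⟨s, hs0, hs1, hseq⟩ := zero_combo hB
    set q := a + t • (b - a) with hq
    set q' := X + s • (Y - X) with hq'
    have hqmem : q ∈ segment ℝ a b := mem_segment_iff_param.mpr ⟨t, ht0, ht1, rfl⟩
    have hq'mem : q' ∈ segment ℝ X Y := mem_segment_iff_param.mpr ⟨s, hs0, hs1, rfl⟩
    have e1 : sg X Y q = 0 := by rw [hq, sg_lineMap]; linarith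
    have e2 : sg a b q' = 0 := by rw [hq', sg_lineMap]; linarith
    have e3 : sg a b q = 0 := by rw [hq, sg_lineMap, sg_self_left, sg_self_right]; ring
    have e4 : sg X Y q' = 0 := by rw [hq', sg_lineMap, sg_self_left, sg_self_right]; ring
    have hab : sg X Y a ≠ sg X Y b := by
      intro h; rw [h] at hA; nlinarith [mul_self_nonneg (sg X Y b)]
    have heq := pt_unique hab e3 e1 e2 e4
    exact ⟨q, hqmem, heq ▸ hq'mem⟩

private lemma combo_param {X d : ℝ × ℝ} {t₀ t₁ s τ : ℝ} (h : (1 - s) * t₀ + s * t₁ = τ) :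
    (1 - s) • (X + t₀ • d) + s • (X + t₁ • d) = X + τ • d := by
  have h1 : ((1 - s) • (X + t₀ • d) + s • (X + t₁ • d)).1 = (X + τ • d).1 := by
    simp [Prod.fst_add, Prod.smul_fst, smul_eq_mul]
    linear_combination d.1 * h
  have h2 : ((1 - s) • (X + t₀ • d) + s • (X + t₁ • d)).2 = (X + τ • d).2 := by
    simp [Prod.snd_add, Prod.smul_snd, smul_eq_mul]
    linear_combination d.2 * h
  exact Prod.ext h1 h2

private lemma no_flip {a W c X Y q₀ : ℝ × ℝ} (hXY : X ≠ Y)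
    (hq₀X : q₀ ∈ segment ℝ X Y) (hq₀T : q₀ ∈ convexHull ℝ ({a, W, c} : Set (ℝ × ℝ)))
    (hWc : sg X Y W * sg X Y c < 0)
    (hsep : ∀ z ∈ segment ℝ W c, z ∉ segment ℝ X Y)
    (hX : X ∉ convexHull ℝ ({a, W, c} : Set (ℝ × ℝ)))
    (hY : Y ∉ convexHull ℝ ({a, W, c} : Set (ℝ × ℝ))) : False := by
  set T := convexHull ℝ ({a, W, c} : Set (ℝ × ℝ)) with hT
  have hWT : W ∈ T := subset_convexHull ℝ _ (by simp)
  have hcT : c ∈ T := subset_convexHull ℝ _ (by simp)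
  obtain ⟨u, hu0, hu1, hueq⟩ := zero_combo hWc
  set q₁ := W + u • (c - W) with hq₁def
  have hq₁seg : q₁ ∈ segment ℝ W c := mem_segment_iff_param.mpr ⟨u, hu0, hu1, rfl⟩
  have hq₁T : q₁ ∈ T := (convex_convexHull ℝ _).segment_subset hWT hcT hq₁seg
  have hq₁z : sg X Y q₁ = 0 := by rw [hq₁def, sg_lineMap]; linarith
  have hq₁notin : q₁ ∉ segment ℝ X Y := hsep _ hq₁seg
  obtain ⟨t₁, hq₁eq⟩ := sg_param hXY hq₁z
  obtain ⟨t₀, ht₀0, ht₀1, hq₀eq⟩ := mem_segment_iff_param.mp hq₀X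
  have ht₁ : ¬ (0 ≤ t₁ ∧ t₁ ≤ 1) := by
    rintro ⟨ha1, ha2⟩
    exact hq₁notin (mem_segment_iff_param.mpr ⟨t₁, ha1, ha2, hq₁eq⟩)
  rw [not_and_or, not_le, not_le] at ht₁
  rcases ht₁ with ht₁ | ht₁
  · have hd : 0 < t₀ - t₁ := by linarith
    set s := t₀ / (t₀ - t₁) with hs
    have hs0 : 0 ≤ s := div_nonneg ht₀0 hd.le
    have hs1 : s ≤ 1 := by rw [hs, div_le_one hd]; linarith
    have hid : (1 - s) * t₀ + s * t₁ = 0 := by rw [hs]; field_simp; ring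
    have hXmem : X ∈ segment ℝ q₀ q₁ :=
      ⟨1 - s, s, by linarith, hs0, by ring, by
        rw [hq₀eq, hq₁eq, combo_param hid, zero_smul, add_zero]⟩
    exact hX ((convex_convexHull ℝ _).segment_subset hq₀T hq₁T hXmem)
  · have hd : 0 < t₁ - t₀ := by linarith
    set s := (1 - t₀) / (t₁ - t₀) with hs
    have hs0 : 0 ≤ s := div_nonneg (by linarith) hd.le
    have hs1 : s ≤ 1 := by rw [hs, div_le_one hd]; linarith
    have hid : (1 - s) * t₀ + s * t₁ = 1 := by rw [hs]; field_simp; ring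
    have hYmem : Y ∈ segment ℝ q₀ q₁ :=
      ⟨1 - s, s, by linarith, hs0, by ring, by
        rw [hq₀eq, hq₁eq, combo_param hid, one_smul, add_sub_cancel]⟩
    exact hY ((convex_convexHull ℝ _).segment_subset hq₀T hq₁T hYmem)

private lemma infdist_pos (s : Set (ℝ × ℝ)) (x : ℝ × ℝ) (hc : IsClosed s) (hne : s.Nonempty)
    (h : x ∉ s) : 0 < Metric.infDist x s := by
  rcases lt_or_eq_of_le (Metric.infDist_nonneg (s := s) (x := x)) with h' | h'
  · exact h'
  · exact absurd ((Metric.mem_closure_iff_infDist_zero hne).2 h'.symm) (by rwa [hc.closure_eq])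

private lemma isClosed_segment' (x y : ℝ × ℝ) : IsClosed (segment ℝ x y) := by
  have h : IsCompact (segment ℝ x y) := by
    rw [segment_eq_image' ℝ x y]
    exact isCompact_Icc.image (by fun_prop)
  exact h.isClosed


/-- The disk lemma: for any rectilinear drawing `p` of `G` and vertex `w`
with neighbours `v₁, …, v_d`, there is `r > 0` such that for any choice `φ` of points
`pᵢ = φ vᵢ` in the closed disk `C` of radius `r` around `p w` (a set of at most `d` points)
keeping all points in general position, the drawing `D'` obtained by replacing each segment
`w vᵢ` by the segment `vᵢ pᵢ` satisfies: (1) edges not incident to `w` cross in `D'` iff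
they cross in `D`; (2) `vᵢ pᵢ` crosses an edge `xy` with `x, y ∉ {w, vᵢ}` in `D'` iff
`w vᵢ` crosses `xy` in `D`; (3) every remaining crossing of `D'` is between two replaced
segments `vᵢ pᵢ`, `vⱼ pⱼ` with `pᵢ ≠ pⱼ`. -/
theorem disk_replacement_lemma {V : Type} [Fintype V] (G : SimpleGraph V) (p : V → ℝ × ℝ)
    (hD : G.toMulti.IsRectDrawing p) (w : V) :
    ∃ r : ℝ, 0 < r ∧
      ∀ φ : Nbr G w → ℝ × ℝ,
        (∀ i : Nbr G w, φ i ∈ Metric.closedBall (p w) r) →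
        GenPos (Set.range p ∪ Set.range φ) →
        -- (1) edges of `G` not incident to `w` cross in `D'` iff they cross in `D`
        ((∀ e₁ e₂ : OldEdge G w,
          NewCross G w p φ (Sum.inl e₁) (Sum.inl e₂) ↔
            G.toMulti.CrossingPair p ⟨e₁.1, e₁.2.1⟩ ⟨e₂.1, e₂.2.1⟩) ∧
        -- (2) `vᵢ pᵢ` crosses `xy` in `D'` iff `w vᵢ` crosses `xy` in `D`
        (∀ (i : Nbr G w) (x y : V), G.Adj x y → x ≠ w → x ≠ i.1 → y ≠ w → y ≠ i.1 →
          ((segment ℝ (p i.1) (φ i) ∩ segment ℝ (p x) (p y)).Nonempty ↔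
            (segment ℝ (p w) (p i.1) ∩ segment ℝ (p x) (p y)).Nonempty)) ∧
        -- (3) every remaining crossing is between two replaced segments with `pᵢ ≠ pⱼ`
        (∀ e₁ e₂ : NewEdge G w, NewCross G w p φ e₁ e₂ →
          (∃ a, e₁ = Sum.inl a) ∨ (∃ a, e₂ = Sum.inl a) ∨
          (∃ i j : Nbr G w, e₁ = Sum.inr i ∧ e₂ = Sum.inr j ∧ φ i ≠ φ j))) := by
  classical
  obtain ⟨hinj, hGPp⟩ := hD
  have hNC : ∀ u v z : V, u ≠ v → u ≠ z → v ≠ z → sg (p u) (p v) (p z) ≠ 0 := by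
    intro u v z huv huz hvz h0
    exact hGPp.1 (p u) ⟨u, rfl⟩ (p v) ⟨v, rfl⟩ (p z) ⟨z, rfl⟩
      (fun h => huv (hinj h)) (fun h => huz (hinj h)) (fun h => hvz (hinj h))
      (collinear_of_sg_eq_zero h0)
  set F : V × V → ℝ := fun uv =>
    if uv.1 ≠ w ∧ uv.2 ≠ w ∧ uv.1 ≠ uv.2 then
      min (|sg (p uv.1) (p uv.2) (p w)| / (2 * ‖p uv.2 - p uv.1‖ + 1))
        (min (Metric.infDist (p w) (segment ℝ (p uv.1) (p uv.2)) / 2)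
          (Metric.infDist (p uv.2) (segment ℝ (p uv.1) (p w)) / 2))
    else 1 with hF
  have hFval : ∀ u v : V, u ≠ w → v ≠ w → u ≠ v →
      F (u, v) = min (|sg (p u) (p v) (p w)| / (2 * ‖p v - p u‖ + 1))
        (min (Metric.infDist (p w) (segment ℝ (p u) (p v)) / 2)
          (Metric.infDist (p v) (segment ℝ (p u) (p w)) / 2)) := by
    intro u v hu hv huv
    rw [hF]
    exact if_pos ⟨hu, hv, huv⟩
  have hFpos : ∀ uv : V × V, 0 < F uv := by
    rintro ⟨u, v⟩
    by_cases h : u ≠ w ∧ v ≠ w ∧ u ≠ v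
    · obtain ⟨hu, hv, huv⟩ := h
      rw [hFval u v hu hv huv]
      refine lt_min ?_ (lt_min ?_ ?_)
      · exact div_pos (abs_pos.mpr (hNC u v w huv hu hv)) (by positivity)
      · have hnm : p w ∉ segment ℝ (p u) (p v) := fun hmem =>
          hNC u v w huv hu hv (sg_eq_zero_of_mem_segment hmem)
        have := infdist_pos _ _ (isClosed_segment' _ _) ⟨_, left_mem_segment ℝ _ _⟩ hnm
        linarith
      · have hnm : p v ∉ segment ℝ (p u) (p w) := fun hmem =>
          hNC u w v hu huv (Ne.symm hv) (sg_eq_zero_of_mem_segment hmem)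
        have := infdist_pos _ _ (isClosed_segment' _ _) ⟨_, left_mem_segment ℝ _ _⟩ hnm
        linarith
    · simp only [hF, if_neg h]; exact one_pos
  have hne : (Finset.univ : Finset (V × V)).Nonempty := ⟨(w, w), Finset.mem_univ _⟩
  set r := Finset.univ.inf' hne F with hrdef
  have hrpos : 0 < r := by
    rw [hrdef, Finset.lt_inf'_iff]
    exact fun b _ => hFpos b
  have hrle : ∀ u v : V, r ≤ F (u, v) := fun u v => Finset.inf'_le F (Finset.mem_univ _)
  -- key consequence 1 : sign of `sg (p u) (p v) ·` is constant on the disk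
  have key1 : ∀ u v : V, u ≠ w → v ≠ w → u ≠ v → ∀ z : ℝ × ℝ, dist z (p w) ≤ r →
      0 < sg (p u) (p v) z * sg (p u) (p v) (p w) := by
    intro u v hu hv huv z hz
    have hF1 : r ≤ |sg (p u) (p v) (p w)| / (2 * ‖p v - p u‖ + 1) :=
      (hrle u v).trans (by rw [hFval u v hu hv huv]; exact min_le_left _ _)
    have hN0 : (0:ℝ) ≤ ‖p v - p u‖ := norm_nonneg _
    have hσ : 0 < |sg (p u) (p v) (p w)| := abs_pos.mpr (hNC u v w huv hu hv)
    have h5 : r * (2 * ‖p v - p u‖ + 1) ≤ |sg (p u) (p v) (p w)| := by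
      rw [← le_div_iff₀ (by positivity)]; exact hF1
    have hbound : |sg (p u) (p v) z - sg (p u) (p v) (p w)| < |sg (p u) (p v) (p w)| := by
      have hdiff : sg (p u) (p v) z - sg (p u) (p v) (p w)
          = ((p v).1 - (p u).1) * (z.2 - (p w).2) - ((p v).2 - (p u).2) * (z.1 - (p w).1) := by
        simp only [sg]; ring
      have h1 : |(p v).1 - (p u).1| ≤ ‖p v - p u‖ := by
        have := norm_fst_le (p v - p u); simpa [Real.norm_eq_abs] using this
      have h2 : |(p v).2 - (p u).2| ≤ ‖p v - p u‖ := by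
        have := norm_snd_le (p v - p u); simpa [Real.norm_eq_abs] using this
      have h3 : |z.1 - (p w).1| ≤ r := by
        have hd : dist z.1 (p w).1 ≤ dist z (p w) := by
          rw [Prod.dist_eq]; exact le_max_left _ _
        rw [Real.dist_eq] at hd; linarith
      have h4 : |z.2 - (p w).2| ≤ r := by
        have hd : dist z.2 (p w).2 ≤ dist z (p w) := by
          rw [Prod.dist_eq]; exact le_max_right _ _
        rw [Real.dist_eq] at hd; linarith
      have habs : |sg (p u) (p v) z - sg (p u) (p v) (p w)|
          ≤ |((p v).1 - (p u).1) * (z.2 - (p w).2)| + |((p v).2 - (p u).2) * (z.1 - (p w).1)| := by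
        rw [hdiff]
        simpa [sub_eq_add_neg, abs_neg] using
          abs_add_le (((p v).1 - (p u).1) * (z.2 - (p w).2))
            (-(((p v).2 - (p u).2) * (z.1 - (p w).1)))
      rw [abs_mul, abs_mul] at habs
      have m1 : |((p v).1 - (p u).1)| * |z.2 - (p w).2| ≤ ‖p v - p u‖ * r :=
        mul_le_mul h1 h4 (abs_nonneg _) hN0
      have m2 : |((p v).2 - (p u).2)| * |z.1 - (p w).1| ≤ ‖p v - p u‖ * r :=
        mul_le_mul h2 h3 (abs_nonneg _) hN0
      have hexp : ‖p v - p u‖ * r + ‖p v - p u‖ * r + r = r * (2 * ‖p v - p u‖ + 1) := by ring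
      linarith
    rcases (hNC u v w huv hu hv).lt_or_gt with hB | hB
    · have hBa : |sg (p u) (p v) (p w)| = -(sg (p u) (p v) (p w)) := abs_of_neg hB
      rw [hBa] at hbound
      have := (abs_lt.mp hbound).2
      have hz0 : sg (p u) (p v) z < 0 := by linarith
      exact mul_pos_of_neg_of_neg hz0 hB
    · have hBa : |sg (p u) (p v) (p w)| = sg (p u) (p v) (p w) := abs_of_pos hB
      rw [hBa] at hbound
      have := (abs_lt.mp hbound).1
      have hz0 : 0 < sg (p u) (p v) z := by linarith
      exact mul_pos hz0 hB
  -- key consequence 2 : the disk avoids all segments between drawing points other than `p w`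
  have key2 : ∀ u v : V, u ≠ w → v ≠ w → u ≠ v → ∀ z : ℝ × ℝ, dist z (p w) ≤ r →
      z ∉ segment ℝ (p u) (p v) := by
    intro u v hu hv huv z hz hmem
    have hF2 : r ≤ Metric.infDist (p w) (segment ℝ (p u) (p v)) / 2 :=
      (hrle u v).trans (by
        rw [hFval u v hu hv huv]; exact (min_le_right _ _).trans (min_le_left _ _))
    have hnm : p w ∉ segment ℝ (p u) (p v) := fun hm =>
      hNC u v w huv hu hv (sg_eq_zero_of_mem_segment hm)
    have hd0 := infdist_pos _ _ (isClosed_segment' _ _) ⟨_, left_mem_segment ℝ _ _⟩ hnm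
    have hle : Metric.infDist (p w) (segment ℝ (p u) (p v)) ≤ dist (p w) z :=
      Metric.infDist_le_dist_of_mem hmem
    rw [dist_comm] at hle
    linarith
  -- key consequence 3 : drawing points other than `p w` avoid the sliver triangles
  have key3 : ∀ u v : V, u ≠ w → v ≠ w → u ≠ v → ∀ c : ℝ × ℝ, dist c (p w) ≤ r →
      p v ∉ convexHull ℝ ({p u, p w, c} : Set (ℝ × ℝ)) := by
    intro u v hu hv huv c hc hmem
    rw [convexHull_insert (by simp : ({p w, c} : Set (ℝ × ℝ)).Nonempty), mem_convexJoin] at hmem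
    obtain ⟨a', ha', z, hz, hseg⟩ := hmem
    rw [Set.mem_singleton_iff] at ha'
    subst ha'
    rw [convexHull_pair] at hz
    have hzball : dist z (p w) ≤ r := by
      have hmem2 : z ∈ Metric.closedBall (p w) r :=
        (convex_closedBall (p w) r).segment_subset (Metric.mem_closedBall_self hrpos.le)
          (by rwa [Metric.mem_closedBall]) hz
      rwa [Metric.mem_closedBall] at hmem2
    obtain ⟨t, ht0, ht1, hveq⟩ := mem_segment_iff_param.mp hseg
    have hs'mem : p u + t • (p w - p u) ∈ segment ℝ (p u) (p w) :=
      mem_segment_iff_param.mpr ⟨t, ht0, ht1, rfl⟩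
    have hdiff : p v - (p u + t • (p w - p u)) = t • (z - p w) := by
      rw [hveq]; module
    have hdist : dist (p v) (p u + t • (p w - p u)) ≤ r := by
      rw [dist_eq_norm, hdiff, norm_smul, Real.norm_eq_abs, abs_of_nonneg ht0]
      have : ‖z - p w‖ ≤ r := by rwa [← dist_eq_norm]
      calc t * ‖z - p w‖ ≤ 1 * r := by
            exact mul_le_mul ht1 this (norm_nonneg _) zero_le_one
        _ = r := one_mul r
    have hF3 : r ≤ Metric.infDist (p v) (segment ℝ (p u) (p w)) / 2 :=
      (hrle u v).trans (by
        rw [hFval u v hu hv huv]; exact (min_le_right _ _).trans (min_le_right _ _))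
    have hnm : p v ∉ segment ℝ (p u) (p w) := fun hm =>
      hNC u w v hu huv (Ne.symm hv) (sg_eq_zero_of_mem_segment hm)
    have hd0 := infdist_pos _ _ (isClosed_segment' _ _) ⟨_, left_mem_segment ℝ _ _⟩ hnm
    have hle : Metric.infDist (p v) (segment ℝ (p u) (p w)) ≤ dist (p v) (p u + t • (p w - p u)) :=
      Metric.infDist_le_dist_of_mem hs'mem
    linarith
  refine ⟨r, hrpos, ?_⟩
  intro φ hφ hGP
  refine ⟨?_, ?_, ?_⟩
  -- Part (1)
  · intro e₁ e₂
    constructor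
    · rintro ⟨hends, hseg⟩
      refine ⟨?_, hseg⟩
      rintro v ⟨hv1, hv2⟩
      have hmem : p v ∈ newEnds G w p φ (Sum.inl e₁) ∩ newEnds G w p φ (Sum.inl e₂) :=
        ⟨⟨v, hv1, rfl⟩, ⟨v, hv2, rfl⟩⟩
      rw [hends] at hmem
      exact hmem
    · rintro ⟨hvert, hseg⟩
      refine ⟨?_, hseg⟩
      apply Set.eq_empty_iff_forall_notMem.mpr
      rintro q ⟨⟨v₁, hv₁, rfl⟩, ⟨v₂, hv₂, hv₂'⟩⟩
      exact hvert v₁ ⟨hv₁, (hinj hv₂') ▸ hv₂⟩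
  -- Part (2)
  · intro i x y hxy hxw hxi hyw hyi
    have hiw : i.1 ≠ w := i.2.ne'
    have hXY : p x ≠ p y := fun h => hxy.ne (hinj h)
    by_cases hc : φ i = p w
    · rw [hc, segment_symm]
    · have hcball : dist (φ i) (p w) ≤ r := by
        have := hφ i; rwa [Metric.mem_closedBall] at this
      have hcx : φ i ≠ p x := by
        intro h
        exact key2 x y hxw hyw hxy.ne (φ i) hcball (by rw [h]; exact left_mem_segment ℝ _ _)
      have hcy : φ i ≠ p y := by
        intro h
        exact key2 x y hxw hyw hxy.ne (φ i) hcball (by rw [h]; exact right_mem_segment ℝ _ _)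
      have hca : φ i ≠ p i.1 := by
        intro h
        exact key2 i.1 x hiw hxw (Ne.symm hxi) (φ i) hcball
          (by rw [h]; exact left_mem_segment ℝ _ _)
      have hXYa : sg (p x) (p y) (p i.1) ≠ 0 := hNC x y i.1 hxy.ne hxi hyi
      have hXYW : sg (p x) (p y) (p w) ≠ 0 := hNC x y w hxy.ne hxw hyw
      have haWX : sg (p i.1) (p w) (p x) ≠ 0 := hNC i.1 w x hiw (Ne.symm hxi) (Ne.symm hxw)
      have haWY : sg (p i.1) (p w) (p y) ≠ 0 := hNC i.1 w y hiw (Ne.symm hyi) (Ne.symm hyw)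
      have hXYc : sg (p x) (p y) (φ i) ≠ 0 := by
        intro h0
        exact hGP.1 (p x) (Set.mem_union_left _ ⟨x, rfl⟩) (p y) (Set.mem_union_left _ ⟨y, rfl⟩)
          (φ i) (Set.mem_union_right _ ⟨i, rfl⟩) hXY (Ne.symm hcx) (Ne.symm hcy)
          (collinear_of_sg_eq_zero h0)
      have s₁ : 0 < sg (p i.1) (p x) (φ i) * sg (p i.1) (p x) (p w) :=
        key1 i.1 x hiw hxw (Ne.symm hxi) (φ i) hcball
      have s₂ : 0 < sg (p i.1) (p y) (φ i) * sg (p i.1) (p y) (p w) :=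
        key1 i.1 y hiw hyw (Ne.symm hyi) (φ i) hcball
      have hacX : sg (p i.1) (φ i) (p x) ≠ 0 := by
        rw [sg_swap (p i.1) (p x) (φ i)]
        exact neg_ne_zero.mpr (left_ne_zero_of_mul s₁.ne')
      have hacY : sg (p i.1) (φ i) (p y) ≠ 0 := by
        rw [sg_swap (p i.1) (p y) (φ i)]
        exact neg_ne_zero.mpr (left_ne_zero_of_mul s₂.ne')
      have hiffc := cross_iff hXYa hXYc hacX hacY
      have hiffW := cross_iff hXYa hXYW haWX haWY
      have E2 : (sg (p i.1) (φ i) (p x) * sg (p i.1) (φ i) (p y) < 0) ↔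
          (sg (p i.1) (p w) (p x) * sg (p i.1) (p w) (p y) < 0) := by
        rw [sg_swap (p i.1) (p x) (φ i), sg_swap (p i.1) (p y) (φ i),
          sg_swap (p i.1) (p x) (p w), sg_swap (p i.1) (p y) (p w), neg_mul_neg, neg_mul_neg]
        constructor <;> intro h <;> nlinarith [mul_pos s₁ s₂]
      have hsep : ∀ z ∈ segment ℝ (p w) (φ i), z ∉ segment ℝ (p x) (p y) := by
        intro z hz
        have hzball : dist z (p w) ≤ r := by
          have hmem2 : z ∈ Metric.closedBall (p w) r :=
            (convex_closedBall (p w) r).segment_subset (Metric.mem_closedBall_self hrpos.le)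
              (hφ i) hz
          rwa [Metric.mem_closedBall] at hmem2
        exact key2 x y hxw hyw hxy.ne z hzball
      have hXT : p x ∉ convexHull ℝ ({p i.1, p w, φ i} : Set (ℝ × ℝ)) :=
        key3 i.1 x hiw hxw (Ne.symm hxi) (φ i) hcball
      have hYT : p y ∉ convexHull ℝ ({p i.1, p w, φ i} : Set (ℝ × ℝ)) :=
        key3 i.1 y hiw hyw (Ne.symm hyi) (φ i) hcball
      rw [segment_symm ℝ (p w) (p i.1), hiffc, hiffW]
      constructor
      · rintro ⟨h1, h2⟩
        refine ⟨?_, E2.mp h2⟩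
        by_contra hW1
        have h3 : 0 < sg (p x) (p y) (p i.1) * sg (p x) (p y) (p w) :=
          lt_of_le_of_ne (not_lt.mp hW1) (Ne.symm (mul_ne_zero hXYa hXYW))
        have hWc : sg (p x) (p y) (p w) * sg (p x) (p y) (φ i) < 0 := by
          nlinarith [sq_nonneg (sg (p x) (p y) (p i.1))]
        obtain ⟨q₀, hq₀ac, hq₀XY⟩ := hiffc.mpr ⟨h1, h2⟩
        have hq₀T : q₀ ∈ convexHull ℝ ({p i.1, p w, φ i} : Set (ℝ × ℝ)) :=
          (convex_convexHull ℝ _).segment_subset (subset_convexHull ℝ _ (by simp))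
            (subset_convexHull ℝ _ (by simp)) hq₀ac
        exact absurd (no_flip hXY hq₀XY hq₀T hWc hsep hXT hYT) not_false
      · rintro ⟨h1, h2⟩
        refine ⟨?_, E2.mpr h2⟩
        by_contra hc1
        have h3 : 0 < sg (p x) (p y) (p i.1) * sg (p x) (p y) (φ i) :=
          lt_of_le_of_ne (not_lt.mp hc1) (Ne.symm (mul_ne_zero hXYa hXYc))
        have hWc : sg (p x) (p y) (p w) * sg (p x) (p y) (φ i) < 0 := by
          nlinarith [sq_nonneg (sg (p x) (p y) (p i.1))]
        obtain ⟨q₀, hq₀aW, hq₀XY⟩ := hiffW.mpr ⟨h1, h2⟩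
        have hq₀T : q₀ ∈ convexHull ℝ ({p i.1, p w, φ i} : Set (ℝ × ℝ)) :=
          (convex_convexHull ℝ _).segment_subset (subset_convexHull ℝ _ (by simp))
            (subset_convexHull ℝ _ (by simp)) hq₀aW
        exact absurd (no_flip hXY hq₀XY hq₀T hWc hsep hXT hYT) not_false
  -- Part (3)
  · intro e₁ e₂ hcross
    match e₁, e₂ with
    | Sum.inl a, _ => exact Or.inl ⟨a, rfl⟩
    | Sum.inr i, Sum.inl a => exact Or.inr (Or.inl ⟨a, rfl⟩)
    | Sum.inr i, Sum.inr j =>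
      refine Or.inr (Or.inr ⟨i, j, rfl, rfl, ?_⟩)
      intro hphi
      have hmem : φ i ∈ newEnds G w p φ (Sum.inr i) ∩ newEnds G w p φ (Sum.inr j) :=
        ⟨Or.inr rfl, Or.inr hphi⟩
      rw [hcross.1] at hmem
      exact hmem
end
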